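/- arXiv:1703.09478 — 8 statements merged into one kernel-verified Lean document; each statement's English description precedes it below -/
import Mathlib

section
/- For h(z) = z - (3/10)z², the supremum over z in the unit disk of Re(1 + z h''(z)/h'(z)) equals 11/8. -/
/-!
With `w = a z`, the quantity `1 + z h''(z) / h'(z)` for `h(z) = z - (a/2) z²` equals
`2 - 1 / (1 - w)`. For `‖w‖ < 1` one has `Re (1 / (1 - w)) ≥ 1 / (1 + ‖w‖)`, which after clearing
denominators is `(‖w‖ + Re w)(1 - ‖w‖) ≥ 0`. Hence the real part stays below `2 - 1 / (1 + a)`,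
and this bound is approached along `z = -r`, `r → 1⁻`; for `a = 3/5` it is `11/8`.
-/

open Complex Metric Filter Topology

lemma one_sub_ne_zero_of_norm_lt_one {R : Type*} [NormedRing R] [NormOneClass R] {w : R}
    (hw : ‖w‖ < 1) : 1 - w ≠ 0 :=
  sub_ne_zero.mpr (ne_of_apply_ne norm (by rw [norm_one]; exact hw.ne)).symm

lemma inv_one_add_norm_le_re_inv_one_sub {w : ℂ} (hw : ‖w‖ < 1) :
    (1 + ‖w‖)⁻¹ ≤ ((1 - w)⁻¹).re := by
  have hnormSq : normSq (1 - w) = 1 - 2 * w.re + ‖w‖ ^ 2 := by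
    rw [Complex.sq_norm, normSq_apply, normSq_apply]
    simp only [sub_re, sub_im, one_re, one_im]
    ring
  have hpos : 0 < normSq (1 - w) := normSq_pos.mpr (one_sub_ne_zero_of_norm_lt_one hw)
  have hre : -‖w‖ ≤ w.re := neg_le_of_abs_le (abs_re_le_norm w)
  rw [inv_re, sub_re, one_re, inv_eq_one_div, div_le_div_iff₀ (by positivity) hpos, hnormSq]
  nlinarith [mul_nonneg (neg_le_iff_add_nonneg.mp hre) (sub_nonneg.mpr hw.le)]

lemma one_add_mul_neg_div_eq {a z : ℂ} (h : 1 - a * z ≠ 0) :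
    1 + z * -a / (1 - a * z) = 2 - (1 - a * z)⁻¹ := by
  rw [show z * -a = (1 - a * z) - 1 by ring, sub_div, div_self h, one_div]
  ring

theorem isLUB_re_one_add_mul_neg_div {a : ℝ} (ha₀ : 0 ≤ a) (ha₁ : a ≤ 1) :
    IsLUB {x : ℝ | ∃ z ∈ ball (0 : ℂ) 1, x = (1 + z * -a / (1 - a * z)).re}
      (2 - (1 + a)⁻¹) := by
  have hnorm {z : ℂ} (hz : z ∈ ball (0 : ℂ) 1) : ‖(a : ℂ) * z‖ < 1 ∧ ‖(a : ℂ) * z‖ ≤ a := by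
    rw [mem_ball_zero_iff] at hz
    rw [norm_mul, norm_real, Real.norm_of_nonneg ha₀]
    constructor <;> nlinarith [norm_nonneg z]
  have hne {z : ℂ} (hz : z ∈ ball (0 : ℂ) 1) : 1 - (a : ℂ) * z ≠ 0 :=
    one_sub_ne_zero_of_norm_lt_one (hnorm hz).1
  constructor
  · rintro x ⟨z, hz, rfl⟩
    rw [one_add_mul_neg_div_eq (hne hz), sub_re, re_ofNat, sub_le_sub_iff_left]
    calc (1 + a)⁻¹ ≤ (1 + ‖(a : ℂ) * z‖)⁻¹ := by
          gcongr
          exact (hnorm hz).2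
      _ ≤ ((1 - a * z)⁻¹).re := inv_one_add_norm_le_re_inv_one_sub (hnorm hz).1
  · intro b hb
    have hcont : ContinuousAt (fun r : ℝ => 2 - (1 + a * r)⁻¹) 1 := by
      fun_prop (disch := positivity)
    have hlim : Tendsto (fun r : ℝ => 2 - (1 + a * r)⁻¹) (𝓝[<] 1) (𝓝 (2 - (1 + a)⁻¹)) := by
      simpa using hcont.tendsto.mono_left nhdsWithin_le_nhds
    refine le_of_tendsto hlim ?_
    filter_upwards [Ioo_mem_nhdsLT (zero_lt_one' ℝ)] with r hr
    have hr_mem : -(r : ℂ) ∈ ball (0 : ℂ) 1 := by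
      rw [mem_ball_zero_iff, norm_neg, norm_real, Real.norm_of_nonneg hr.1.le]
      exact hr.2
    refine hb ⟨-r, hr_mem, ?_⟩
    rw [one_add_mul_neg_div_eq (hne hr_mem),
      show (1 : ℂ) - a * -r = ((1 + a * r : ℝ) : ℂ) by push_cast; ring,
      ← ofReal_inv, sub_re, re_ofNat, ofReal_re]

theorem stmt_0 :
    sSup {x : ℝ | ∃ z ∈ ball (0 : ℂ) 1,
      x = (1 + z * ((-3/5 : ℂ)) / (1 - (3/5 : ℂ) * z)).re} = 11/8 := by
  have h := (isLUB_re_one_add_mul_neg_div (a := 3/5) (by norm_num) (by norm_num)).csSup_eq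
    ⟨_, 0, mem_ball_self one_pos, rfl⟩
  simp only [ofReal_div, ofReal_ofNat, ← neg_div] at h
  rw [h]
  norm_num
end

section
/- Let 1 < γ ≤ 7/4 and f_γ(z) = h(z) + conj(g(z)) with h(z) = (1 - (1-z)^γ)/γ and g(z) = (1 - (1+γz)(1-z)^γ)/(γ(1+γ)) (principal branches). Then for every z ∈ 𝔻, Im(f_γ(z)) = -|1-z|^{γ+1} · sin((γ+1)·Arg(1-z)) / (γ+1), where Arg denotes the principal argument. -/
open Complex Metric

/-- Writing `(1 + γ z) A = (1 + γ) A - γ (1 - z) A`, the terms in `Im A` cancel. -/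
lemma im_div_add_conj_div (γ : ℝ) (hγ : γ ≠ 0) (hγ₁ : 1 + γ ≠ 0) (A z : ℂ) :
    ((1 - A) / γ + starRingEnd ℂ ((1 - (1 + γ * z) * A) / (γ * (1 + γ)))).im =
      -(A * (1 - z)).im / (1 + γ) := by
  have hsplit : 1 - (1 + γ * z) * A = 1 - (1 + γ) * A + γ * (A * (1 - z)) := by ring
  have hden : (γ : ℂ) * (1 + γ) = ((γ * (1 + γ) : ℝ) : ℂ) := by push_cast; ring
  rw [hsplit, hden]
  simp only [add_im, conj_im, div_ofReal_im, sub_im, one_im, mul_im, add_re, one_re,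
    ofReal_re, ofReal_im]
  field_simp
  ring

theorem stmt_5 (γ : ℝ) (hγ : 1 < γ ∧ γ ≤ 7/4)
    (f : ℂ → ℂ)
    (hf : ∀ z : ℂ, f z = (1 - (1 - z) ^ (γ : ℂ)) / (γ : ℂ) +
      starRingEnd ℂ ((1 - (1 + (γ : ℂ) * z) * (1 - z) ^ (γ : ℂ)) / ((γ : ℂ) * (1 + γ)))) :
    ∀ z ∈ ball (0 : ℂ) 1,
      (f z).im = -(‖1 - z‖) ^ (γ + 1) *
        Real.sin ((γ + 1) * Complex.arg (1 - z)) / (γ + 1) := by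
  intro z hz
  have hz₁ : 1 - z ≠ 0 := by
    rw [sub_ne_zero]
    rintro rfl
    simp at hz
  have hpow : (1 - z) ^ (γ : ℂ) * (1 - z) = (1 - z) ^ ((γ + 1 : ℝ) : ℂ) := by
    rw [ofReal_add, ofReal_one, cpow_add _ _ hz₁, cpow_one]
  rw [hf, im_div_add_conj_div γ (by linarith) (by linarith), hpow, cpow_ofReal_im, add_comm 1 γ,
    mul_comm (arg _)]
  ring
end

section
/- Let 1 < γ ≤ 7/4 and f_γ(z) = h(z) + conj(g(z)) with h(z) = (1 - (1-z)^γ)/γ and g(z) = (1 - (1+γz)(1-z)^γ)/(γ(1+γ)) (principal branches). Then f_γ is not injective on 𝔻: there exist distinct points z₁, z₂ ∈ 𝔻 with f_γ(z₁) = f_γ(z₂). -/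
/-!
Write `u = 1 - z`. Both `h` and `g` commute with conjugation away from the cut `u ∈ (-∞, 0]`,
and `h - g = (1 - u ^ (γ + 1)) / (1 + γ)`. Hence `f_γ(z) - f_γ(z̄) = 2i Im(h - g)(z)` vanishes as
soon as `u ^ (γ + 1)` is real. For `γ > 1` the angle `θ = π / (γ + 1)` is below `π / 2`, and
`u = cos θ · e^{iθ}` has `u ^ (γ + 1) = -(cos θ) ^ (γ + 1)` while `|1 - u| = sin θ < 1`,
so `z = 1 - u` and `z̄` are two distinct points of the disk with the same image.
-/

open Complex Metric ComplexConjugate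

theorem Complex.exp_cpow {c : ℂ} (h₁ : -Real.pi < c.im) (h₂ : c.im ≤ Real.pi) (s : ℂ) :
    exp c ^ s = exp (c * s) := by
  rw [cpow_def_of_ne_zero (exp_ne_zero c), log_exp h₁ h₂]

namespace GammaShear

variable (γ : ℝ)

noncomputable def h (z : ℂ) : ℂ := (1 - (1 - z) ^ (γ : ℂ)) / γ

noncomputable def g (z : ℂ) : ℂ := (1 - (1 + γ * z) * (1 - z) ^ (γ : ℂ)) / (γ * (1 + γ))

noncomputable def f (z : ℂ) : ℂ := h γ z + conj (g γ z)

variable {γ} {z : ℂ}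

theorem one_sub_conj_cpow (hz : (1 - z).arg ≠ Real.pi) :
    (1 - conj z) ^ (γ : ℂ) = conj ((1 - z) ^ (γ : ℂ)) := by
  rw [← conj_ofReal γ, ← conj_cpow _ _ hz, map_sub, map_one, conj_ofReal]

theorem h_conj (hz : (1 - z).arg ≠ Real.pi) : h γ (conj z) = conj (h γ z) := by
  simp only [h, one_sub_conj_cpow hz, map_div₀, map_sub, map_one, conj_ofReal]

theorem g_conj (hz : (1 - z).arg ≠ Real.pi) : g γ (conj z) = conj (g γ z) := by
  simp only [g, one_sub_conj_cpow hz, map_div₀, map_sub, map_mul, map_add, map_one, conj_ofReal]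

theorem h_sub_g (hγ : γ ≠ 0) (hγ' : 1 + γ ≠ 0) :
    h γ z - g γ z = (1 - (1 - z) * (1 - z) ^ (γ : ℂ)) / (1 + γ) := by
  have hγc : (γ : ℂ) ≠ 0 := by exact_mod_cast hγ
  have hγc' : (1 + γ : ℂ) ≠ 0 := by exact_mod_cast hγ'
  simp only [h, g]
  field_simp
  ring

theorem f_conj_eq (hγ : γ ≠ 0) (hγ' : 1 + γ ≠ 0) (hz : (1 - z).arg ≠ Real.pi)
    (hreal : ((1 - z) * (1 - z) ^ (γ : ℂ)).im = 0) : f γ (conj z) = f γ z := by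
  have hreal' : conj (h γ z - g γ z) = h γ z - g γ z := by
    rw [conj_eq_iff_im, h_sub_g hγ hγ', show (1 + γ : ℂ) = (1 + γ : ℝ) by push_cast; rfl,
      div_ofReal_im, sub_im, one_im, hreal, sub_zero, zero_div]
  simp only [f, h_conj hz, g_conj hz, conj_conj]
  rw [map_sub] at hreal'
  linear_combination hreal'

theorem exists_nonreal_mem_ball_real_cpow_succ (hγ : 1 < γ) :
    ∃ z ∈ ball (0 : ℂ) 1, z.im ≠ 0 ∧ ((1 - z) * (1 - z) ^ (γ : ℂ)).im = 0 := by
  set θ := Real.pi / (1 + γ) with hθ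
  have hθ_pos : 0 < θ := by positivity
  have hθ_lt : θ < Real.pi / 2 := by
    rw [hθ, div_lt_div_iff₀ (by linarith) two_pos]
    nlinarith [Real.pi_pos]
  have hcos : 0 < Real.cos θ := Real.cos_pos_of_mem_Ioo ⟨by linarith, hθ_lt⟩
  have hsin : 0 < Real.sin θ := Real.sin_pos_of_pos_of_lt_pi hθ_pos (by linarith)
  set c : ℂ := Real.log (Real.cos θ) + θ * I with hc
  have hc_re : c.re = Real.log (Real.cos θ) := by simp [hc]
  have hc_im : c.im = θ := by simp [hc]
  have hexp_re : (exp c).re = Real.cos θ ^ 2 := by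
    rw [exp_re, hc_re, hc_im, Real.exp_log hcos, sq]
  have hexp_im : (exp c).im = Real.cos θ * Real.sin θ := by
    rw [exp_im, hc_re, hc_im, Real.exp_log hcos]
  refine ⟨1 - exp c, ?_, ?_, ?_⟩
  · have hsq : ‖1 - exp c‖ ^ 2 = Real.sin θ ^ 2 := by
      rw [Complex.sq_norm, normSq_apply, sub_re, sub_im, one_re, one_im, hexp_re, hexp_im]
      nlinarith [Real.sin_sq_add_cos_sq θ]
    rw [mem_ball_zero_iff, ← sq_lt_one_iff₀ (norm_nonneg _), hsq, sq_lt_one_iff₀ hsin.le]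
    nlinarith [Real.sin_sq_add_cos_sq θ]
  · rw [sub_im, one_im, hexp_im]
    nlinarith [mul_pos hcos hsin]
  · rw [sub_sub_cancel, exp_cpow (by linarith) (by linarith), ← exp_add, exp_im]
    have hπ : (c + c * γ).im = Real.pi := by
      simp only [hc, add_im, mul_im, ofReal_re, ofReal_im, I_re, I_im]
      rw [hθ]; field_simp; ring
    rw [hπ, Real.sin_pi, mul_zero]

end GammaShear

theorem stmt_7 (γ : ℝ) (hγ : 1 < γ ∧ γ ≤ 7/4)
    (f : ℂ → ℂ)
    (hf : ∀ z : ℂ, f z = (1 - (1 - z) ^ (γ : ℂ)) / (γ : ℂ) +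
      starRingEnd ℂ ((1 - (1 + (γ : ℂ) * z) * (1 - z) ^ (γ : ℂ)) / ((γ : ℂ) * (1 + γ)))) :
    ∃ z₁ ∈ ball (0 : ℂ) 1, ∃ z₂ ∈ ball (0 : ℂ) 1, z₁ ≠ z₂ ∧ f z₁ = f z₂ := by
  obtain ⟨z, hz, him, hreal⟩ := GammaShear.exists_nonreal_mem_ball_real_cpow_succ hγ.1
  have hf' : f = GammaShear.f γ := funext hf
  have harg : (1 - z).arg ≠ Real.pi := fun hπ => him (by simpa using (arg_eq_pi_iff.mp hπ).2)
  refine ⟨z, hz, conj z, by simpa using hz, fun h => him ?_, ?_⟩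
  · linarith [conj_im z ▸ congrArg im h]
  · rw [hf', GammaShear.f_conj_eq (by linarith [hγ.1]) (by linarith [hγ.1]) harg hreal]
end

section
/- For every β ∈ (1, 11/8], the class 𝒫(β) = {f = h + conj(g) : h, g analytic on 𝔻, h(0)=g(0)=0, h'(0)=1, g'=z·h', and Re(1 + z h''(z)/h'(z)) < β on 𝔻} contains a function that is not injective on 𝔻. -/
/-!
Take `f_γ = h + conj g` with `γ = 2β - 1 > 1`. Since `h'(z) = (1 - z)^(γ-1)`, we get
`1 + z h''/h' = 1 - (γ - 1) z/(1 - z)`, and `Re (z/(1 - z)) > -1/2` on the disk bounds its real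
part by `(γ + 1)/2 = β`. Writing `z = 1 - w`,
`f(1 - w) = const - (2/γ) Re (w^γ) + conj (w^(γ+1))/(γ + 1)`, so `f(1 - w) = f(1 - conj w)` as soon
as `w^(γ+1)` is real. For `θ = π/(γ + 1) < π/2` the point `w = cos θ · e^(iθ)` has this property,
`w ≠ conj w`, and `|1 - w| = sin θ < 1`.
-/

open Complex ComplexConjugate Metric
open scoped Real

lemma one_sub_mem_slitPlane {z : ℂ} (hz : z ∈ ball (0 : ℂ) 1) : 1 - z ∈ slitPlane := by
  refine mem_slitPlane_iff.2 (Or.inl ?_)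
  have := (re_le_norm z).trans_lt (mem_ball_zero_iff.1 hz)
  simp only [sub_re, one_re]
  linarith

lemma hasDerivAt_one_sub_cpow (c : ℂ) {z : ℂ} (hz : 1 - z ∈ slitPlane) :
    HasDerivAt (fun w : ℂ => (1 - w) ^ c) (-(c * (1 - z) ^ (c - 1))) z := by
  simpa using ((hasDerivAt_id z).const_sub 1).cpow_const hz

lemma neg_half_lt_re_div_one_sub {z : ℂ} (hz : z ∈ ball (0 : ℂ) 1) :
    -(1 / 2) < (z / (1 - z)).re := by
  have hz2 : normSq z < 1 := by
    rw [normSq_eq_norm_sq]; nlinarith [mem_ball_zero_iff.1 hz, norm_nonneg z]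
  have hpos : 0 < normSq (1 - z) := normSq_pos.2 (slitPlane_ne_zero (one_sub_mem_slitPlane hz))
  rw [div_re, ← add_div, neg_lt, ← neg_div, div_lt_iff₀ hpos]
  simp only [normSq_apply, sub_re, sub_im, one_re, one_im] at hz2 hpos ⊢
  nlinarith

lemma one_sub_cos_mul_exp_mul_I (θ : ℝ) :
    1 - Real.cos θ * exp (θ * I) = -(Real.sin θ * I * exp (θ * I)) := by
  rw [exp_mul_I, ofReal_cos, ofReal_sin]
  linear_combination (-1) * sin_sq_add_cos_sq (θ : ℂ) + sin (θ : ℂ) ^ 2 * I_sq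

noncomputable section

namespace Fγ

def h (c : ℂ) (z : ℂ) : ℂ := (1 - (1 - z) ^ c) / c

def g (c : ℂ) (z : ℂ) : ℂ := (1 - (1 + c * z) * (1 - z) ^ c) / (c * (c + 1))

section Derivatives

variable {c : ℂ}

lemma hasDerivAt_h (hc : c ≠ 0) {z : ℂ} (hz : 1 - z ∈ slitPlane) :
    HasDerivAt (h c) ((1 - z) ^ (c - 1)) z := by
  refine (((hasDerivAt_one_sub_cpow c hz).const_sub 1).div_const c).congr_deriv ?_
  field_simp

lemma hasDerivAt_g (hc : c ≠ 0) (hc' : c + 1 ≠ 0) {z : ℂ} (hz : 1 - z ∈ slitPlane) :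
    HasDerivAt (g c) (z * (1 - z) ^ (c - 1)) z := by
  have hlin : HasDerivAt (fun w : ℂ => 1 + c * w) c z := by
    simpa using ((hasDerivAt_id z).const_mul c).const_add 1
  refine (((hlin.mul (hasDerivAt_one_sub_cpow c hz)).const_sub 1).div_const
    (c * (c + 1))).congr_deriv ?_
  have hne := slitPlane_ne_zero hz
  rw [cpow_sub _ _ hne, cpow_one]
  field_simp
  ring

lemma analyticOnNhd_h : AnalyticOnNhd ℂ (h c) (ball 0 1) := fun _ hz =>
  (analyticAt_const.sub ((analyticAt_const.sub analyticAt_id).cpow analyticAt_const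
    (one_sub_mem_slitPlane hz))).div_const

lemma analyticOnNhd_g : AnalyticOnNhd ℂ (g c) (ball 0 1) := fun _ hz =>
  (analyticAt_const.sub ((analyticAt_const.add (analyticAt_const.mul analyticAt_id)).mul
    ((analyticAt_const.sub analyticAt_id).cpow analyticAt_const
      (one_sub_mem_slitPlane hz)))).div_const

@[simp] lemma h_zero : h c 0 = 0 := by simp [h]

@[simp] lemma g_zero : g c 0 = 0 := by simp [g]

lemma deriv_h (hc : c ≠ 0) {z : ℂ} (hz : z ∈ ball (0 : ℂ) 1) :
    deriv (h c) z = (1 - z) ^ (c - 1) :=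
  (hasDerivAt_h hc (one_sub_mem_slitPlane hz)).deriv

lemma deriv_g (hc : c ≠ 0) (hc' : c + 1 ≠ 0) {z : ℂ} (hz : z ∈ ball (0 : ℂ) 1) :
    deriv (g c) z = z * deriv (h c) z := by
  rw [(hasDerivAt_g hc hc' (one_sub_mem_slitPlane hz)).deriv, deriv_h hc hz]

lemma deriv_deriv_h (hc : c ≠ 0) {z : ℂ} (hz : z ∈ ball (0 : ℂ) 1) :
    deriv (deriv (h c)) z = -((c - 1) * (1 - z) ^ (c - 1 - 1)) := by
  have hev : deriv (h c) =ᶠ[nhds z] fun w => (1 - w) ^ (c - 1) := by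
    filter_upwards [isOpen_ball.mem_nhds hz] with w hw using deriv_h hc hw
  rw [hev.deriv_eq, (hasDerivAt_one_sub_cpow (c - 1) (one_sub_mem_slitPlane hz)).deriv]

lemma one_add_mul_deriv_deriv_div_deriv_h (hc : c ≠ 0) {z : ℂ} (hz : z ∈ ball (0 : ℂ) 1) :
    1 + z * deriv (deriv (h c)) z / deriv (h c) z = 1 - (c - 1) * (z / (1 - z)) := by
  have hne := slitPlane_ne_zero (one_sub_mem_slitPlane hz)
  rw [deriv_deriv_h hc hz, deriv_h hc hz, cpow_sub _ _ hne, cpow_one]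
  have : (1 - z) ^ (c - 1) ≠ 0 := by simp [cpow_eq_zero_iff, hne]
  field_simp
  ring

end Derivatives

lemma re_one_add_mul_deriv_deriv_div_deriv_h_lt {c : ℝ} (hc : 1 < c) {z : ℂ}
    (hz : z ∈ ball (0 : ℂ) 1) :
    (1 + z * deriv (deriv (h c)) z / deriv (h c) z).re < (c + 1) / 2 := by
  rw [one_add_mul_deriv_deriv_div_deriv_h (ofReal_ne_zero.2 (by linarith)) hz,
    show (c : ℂ) - 1 = ((c - 1 : ℝ) : ℂ) by push_cast; rfl, sub_re, one_re, re_ofReal_mul]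
  nlinarith [neg_half_lt_re_div_one_sub hz]

lemma h_add_conj_g_one_sub {c : ℝ} (hc : c ≠ 0) (hc' : c + 1 ≠ 0) {w : ℂ} (hw : w ≠ 0) :
    h c (1 - w) + conj (g c (1 - w)) =
      1 / c + 1 / (c * (c + 1)) - 2 * (w ^ (c : ℂ)).re / c + conj (w ^ (c + 1 : ℂ)) / (c + 1) := by
  have hc : (c : ℂ) ≠ 0 := ofReal_ne_zero.2 hc
  have hc' : (c : ℂ) + 1 ≠ 0 := by exact_mod_cast hc'
  have hre := add_conj (w ^ (c : ℂ))
  push_cast at hre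
  simp only [h, g, sub_sub_cancel, cpow_add _ _ hw, cpow_one, map_div₀, map_sub, map_mul,
    map_add, map_one, conj_ofReal]
  field_simp
  linear_combination (-((c : ℂ) + 1)) * hre

lemma h_add_conj_g_one_sub_conj {c : ℝ} (hc : c ≠ 0) (hc' : c + 1 ≠ 0) {w : ℂ} (hw : w ≠ 0)
    (harg : arg w ≠ π) (hreal : conj (w ^ (c + 1 : ℂ)) = w ^ (c + 1 : ℂ)) :
    h c (1 - conj w) + conj (g c (1 - conj w)) = h c (1 - w) + conj (g c (1 - w)) := by
  rw [h_add_conj_g_one_sub hc hc' (map_ne_zero _ |>.2 hw), h_add_conj_g_one_sub hc hc' hw]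
  simp only [conj_cpow _ _ harg, map_add, map_one, conj_ofReal, conj_re, hreal]

lemma exists_ne_h_add_conj_g_eq {c : ℝ} (hc : 1 < c) :
    ∃ z₁ ∈ ball (0 : ℂ) 1, ∃ z₂ ∈ ball (0 : ℂ) 1, z₁ ≠ z₂ ∧
      h c z₁ + conj (g c z₁) = h c z₂ + conj (g c z₂) := by
  set θ := π / (c + 1)
  have hθ0 : 0 < θ := div_pos Real.pi_pos (by linarith)
  have hθ : θ < π / 2 := div_lt_div_of_pos_left Real.pi_pos two_pos (by linarith)
  have hcos : 0 < Real.cos θ := Real.cos_pos_of_mem_Ioo ⟨by linarith, hθ⟩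
  have hsin : 0 < Real.sin θ := Real.sin_pos_of_pos_of_lt_pi hθ0 (by linarith)
  set w : ℂ := Real.cos θ * exp (θ * I)
  have hw : w ≠ 0 := mul_ne_zero (ofReal_ne_zero.2 hcos.ne') (exp_ne_zero _)
  have harg : arg w = θ := by
    rw [arg_real_mul _ hcos, exp_mul_I, arg_cos_add_sin_mul_I ⟨by linarith, by linarith⟩]
  have hwim : w.im ≠ 0 := by
    rw [im_ofReal_mul, exp_ofReal_mul_I_im]
    positivity
  have hreal : conj (w ^ (c + 1 : ℂ)) = w ^ (c + 1 : ℂ) := by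
    rw [conj_eq_iff_im, ← ofReal_one, ← ofReal_add, cpow_ofReal_im, harg,
      div_mul_cancel₀ _ (by linarith), Real.sin_pi, mul_zero]
  have hmem : 1 - w ∈ ball (0 : ℂ) 1 := by
    rw [mem_ball_zero_iff, one_sub_cos_mul_exp_mul_I, norm_neg, norm_mul, norm_mul, norm_I,
      norm_exp_ofReal_mul_I, norm_real, Real.norm_of_nonneg hsin.le, mul_one, mul_one]
    nlinarith [Real.sin_sq_add_cos_sq θ]
  refine ⟨1 - conj w, ?_, 1 - w, hmem, ?_, h_add_conj_g_one_sub_conj (by linarith) (by linarith) hw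
    (by rw [harg]; linarith) hreal⟩
  · rwa [mem_ball_zero_iff, ← map_one (conj : ℂ →+* ℂ), ← map_sub, norm_conj,
      ← mem_ball_zero_iff]
  · rw [Ne, sub_right_inj, conj_eq_iff_im]
    exact hwim

end Fγ

end

theorem stmt_8 (β : ℝ) (hβ : 1 < β ∧ β ≤ 11/8) :
    ∃ h g : ℂ → ℂ,
      AnalyticOnNhd ℂ h (ball (0 : ℂ) 1) ∧
      AnalyticOnNhd ℂ g (ball (0 : ℂ) 1) ∧
      h 0 = 0 ∧ g 0 = 0 ∧ deriv h 0 = 1 ∧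
      (∀ z ∈ ball (0 : ℂ) 1, deriv g z = z * deriv h z) ∧
      (∀ z ∈ ball (0 : ℂ) 1, (1 + z * deriv (deriv h) z / deriv h z).re < β) ∧
      ∃ z₁ ∈ ball (0 : ℂ) 1, ∃ z₂ ∈ ball (0 : ℂ) 1,
        z₁ ≠ z₂ ∧ h z₁ + starRingEnd ℂ (g z₁) = h z₂ + starRingEnd ℂ (g z₂) := by
  set γ : ℝ := 2 * β - 1
  have hγ : 1 < γ := by linarith [hβ.1]
  have hγ0 : (γ : ℂ) ≠ 0 := ofReal_ne_zero.2 (by linarith)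
  have hγ1 : (γ : ℂ) + 1 ≠ 0 := by exact_mod_cast (show γ + 1 ≠ 0 by linarith)
  refine ⟨Fγ.h γ, Fγ.g γ, Fγ.analyticOnNhd_h, Fγ.analyticOnNhd_g, Fγ.h_zero, Fγ.g_zero, ?_,
    fun z hz => Fγ.deriv_g hγ0 hγ1 hz, fun z hz => ?_, Fγ.exists_ne_h_add_conj_g_eq hγ⟩
  · simp [Fγ.deriv_h hγ0 (mem_ball_self one_pos)]
  · have hre := Fγ.re_one_add_mul_deriv_deriv_div_deriv_h_lt hγ hz
    linarith
end

section
/- Let h be analytic on 𝔻 with h(0) = 0, h'(0) = 1, and Re(1 + z h''(z)/h'(z)) > α on 𝔻 for some 0 ≤ α < 1. Then for |z| = r < 1, 1/(1+r)^{2(1-α)} ≤ |h'(z)| ≤ 1/(1-r)^{2(1-α)}. -/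
/-!
The map `w = (p - 1) / (p + 1 - 2α)` sends the half-plane `Re p > α` into the unit disc, so the
Schwarz lemma applied to `p = 1 + z h''/h'` gives
`-2(1-α)|z|/(1+|z|) ≤ Re (z h''/h') ≤ 2(1-α)|z|/(1-|z|)`. As
`d/dt log |h'(t z)| = Re (z h''(t z) / h'(t z))`, integrating these bounds along the radius
`[0, z]` gives the distortion estimates.

The hypothesis is void at zeros of `h'`, where the quotient is `0` by convention, so `h' ≠ 0`
has to be proved first: at a zero `z₀ ≠ 0` of order `n`, along the radius `t z₀` the quantity
`Re (z h''/h')` behaves like `n t / (t - 1) → -∞` as `t → 1⁻`.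
-/

open Complex Metric Filter Topology Set

theorem re_div_one_sub_mem_Icc {w : ℂ} {s : ℝ} (hw : ‖w‖ ≤ s) (hs : s < 1) :
    (w / (1 - w)).re ∈ Icc (-(s / (1 + s))) (s / (1 - s)) := by
  obtain ⟨hxl, hxu⟩ := abs_le.1 (abs_re_le_norm w)
  have hρ : ‖w‖ ^ 2 = w.re ^ 2 + w.im ^ 2 := by rw [Complex.sq_norm, normSq_apply]; ring
  have hN : normSq (1 - w) = 1 - 2 * w.re + ‖w‖ ^ 2 := by
    rw [normSq_apply, hρ]; simp only [sub_re, one_re, sub_im, one_im]; ring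
  have hNpos : 0 < normSq (1 - w) := by
    rw [hN]; nlinarith [norm_nonneg w]
  have hre : (w / (1 - w)).re = (w.re - ‖w‖ ^ 2) / normSq (1 - w) := by
    rw [div_re, hρ]
    simp only [sub_re, one_re, sub_im, one_im]
    field_simp
    ring
  rw [hre, mem_Icc, ← neg_div, div_le_div_iff₀ (by linarith [norm_nonneg w]) hNpos,
    div_le_div_iff₀ hNpos (by linarith), hN]
  constructor
  · nlinarith [mul_nonneg (sub_nonneg.2 hw) (by linarith : (0:ℝ) ≤ 1 + ‖w‖),
      mul_nonneg (by linarith : (0:ℝ) ≤ w.re + ‖w‖) (by linarith : (0:ℝ) ≤ 1 - s)]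
  · nlinarith [mul_nonneg (sub_nonneg.2 hw) (by linarith : (0:ℝ) ≤ 1 - ‖w‖),
      mul_nonneg (by linarith : (0:ℝ) ≤ ‖w‖ - w.re) (by linarith [norm_nonneg w] : (0:ℝ) ≤ 1 + s)]

theorem re_sub_one_mem_Icc_of_forall_lt_re {p : ℂ → ℂ} {α : ℝ} (hα : α < 1)
    (hp : DifferentiableOn ℂ p (ball 0 1)) (hp0 : p 0 = 1)
    (hre : ∀ z ∈ ball (0 : ℂ) 1, α < (p z).re) {z : ℂ} (hz : z ∈ ball (0 : ℂ) 1) :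
    (p z - 1).re ∈
      Icc (-(2 * (1 - α) * (‖z‖ / (1 + ‖z‖)))) (2 * (1 - α) * (‖z‖ / (1 - ‖z‖))) := by
  set c : ℂ := ((1 - 2 * α : ℝ) : ℂ)
  have hden : ∀ u ∈ ball (0 : ℂ) 1, p u + c ≠ 0 := fun u hu h => by
    have := congrArg re h
    simp only [add_re, ofReal_re, zero_re, c] at this
    linarith [hre u hu]
  set w : ℂ → ℂ := fun u => (p u - 1) / (p u + c)
  have hw_lt : ∀ u ∈ ball (0 : ℂ) 1, ‖w u‖ < 1 := by
    intro u hu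
    rw [norm_div, div_lt_one (norm_pos_iff.2 (hden u hu))]
    refine lt_of_pow_lt_pow_left₀ 2 (norm_nonneg _) ?_
    simp only [Complex.sq_norm, normSq_apply, sub_re, add_re, sub_im, add_im, one_re, one_im,
      ofReal_re, ofReal_im, c]
    nlinarith [hre u hu]
  have hschwarz : ‖w z‖ ≤ ‖z‖ :=
    norm_le_norm_of_mapsTo_ball ((hp.sub_const 1).div (hp.add_const c) hden)
      (fun u hu => mem_closedBall_zero_iff.2 (hw_lt u hu).le) (by simp [w, hp0])
      (mem_ball_zero_iff.1 hz)
  have hcayley : p z - 1 = ((2 * (1 - α) : ℝ) : ℂ) * (w z / (1 - w z)) := by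
    have h1w : 1 - w z = (c + 1) / (p z + c) := by
      simp only [w]
      field_simp [hden z hz]
      ring
    have hc1 : c + 1 = ((2 * (1 - α) : ℝ) : ℂ) := by
      simp only [c]
      push_cast
      ring
    have h2α : ((2 * (1 - α) : ℝ) : ℂ) ≠ 0 := ofReal_ne_zero.2 (by linarith)
    rw [h1w, hc1]
    simp only [w]
    field_simp [hden z hz, h2α]
  obtain ⟨hlow, hupp⟩ := re_div_one_sub_mem_Icc hschwarz (mem_ball_zero_iff.1 hz)
  have hα0 : 0 ≤ 2 * (1 - α) := by linarith
  rw [hcayley, re_ofReal_mul, ← mul_neg]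
  exact ⟨mul_le_mul_of_nonneg_left hlow hα0, mul_le_mul_of_nonneg_left hupp hα0⟩

theorem logDeriv_eventuallyEq_of_eventuallyEq_pow_smul {f g : ℂ → ℂ} {z₀ : ℂ} {n : ℕ}
    (hg : AnalyticAt ℂ g z₀) (hgz₀ : g z₀ ≠ 0)
    (hf : ∀ᶠ z in 𝓝 z₀, f z = (z - z₀) ^ n • g z) :
    ∀ᶠ z in 𝓝[≠] z₀, logDeriv f z = n / (z - z₀) + logDeriv g z := by
  filter_upwards [nhdsWithin_le_nhds hf.eventually_nhds,
    nhdsWithin_le_nhds (hg.continuousAt.eventually_ne hgz₀),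
    nhdsWithin_le_nhds hg.eventually_analyticAt, self_mem_nhdsWithin]
    with z hfz hgz hgan hz
  have hfz' : f =ᶠ[𝓝 z] fun x => (x - z₀) ^ n * g x := hfz.mono fun x hx => by
    rwa [smul_eq_mul] at hx
  rw [(logDeriv_congr_nhds hfz').eq_of_nhds,
    logDeriv_mul (f := fun x => (x - z₀) ^ n) z (pow_ne_zero _ (sub_ne_zero.2 hz)) hgz
      (by fun_prop) hgan.differentiableAt,
    logDeriv_fun_pow (by fun_prop)]
  simp [logDeriv_apply, div_eq_mul_inv]

theorem AnalyticAt.tendsto_re_mul_logDeriv_atBot {f : ℂ → ℂ} {z₀ : ℂ} (hf : AnalyticAt ℂ f z₀)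
    (hz₀ : z₀ ≠ 0) (hfz₀ : f z₀ = 0) (hnz : ¬∀ᶠ z in 𝓝 z₀, f z = 0) :
    Tendsto (fun t : ℝ => ((t : ℂ) * z₀ * logDeriv f (t * z₀)).re) (𝓝[<] 1) atBot := by
  obtain ⟨n, g, hg, hgz₀, hfg⟩ := hf.exists_eventuallyEq_pow_smul_nonzero_iff.2 hnz
  have hn : (0 : ℝ) < n := by
    refine Nat.cast_pos.2 (Nat.pos_of_ne_zero ?_)
    rintro rfl
    simpa [hfz₀, hgz₀, eq_comm] using hfg.self_of_nhds
  have hray : Tendsto (fun t : ℝ => (t : ℂ) * z₀) (𝓝[<] 1) (𝓝[≠] z₀) := by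
    refine tendsto_nhdsWithin_iff.2 ⟨?_, eventually_nhdsWithin_of_forall fun t ht => ?_⟩
    · exact ((by fun_prop : Continuous fun t : ℝ => (t : ℂ) * z₀).tendsto' 1 z₀
        (by simp)).mono_left nhdsWithin_le_nhds
    · simpa [hz₀] using ht.ne
  have hpole : Tendsto (fun t : ℝ => n * t * (t - 1)⁻¹) (𝓝[<] 1) atBot := by
    refine Tendsto.pos_mul_atBot (C := n) hn ?_ (tendsto_inv_nhdsLT_zero.comp ?_)
    · exact ((by fun_prop : Continuous fun t : ℝ => (n : ℝ) * t).tendsto' 1 n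
        (mul_one _)).mono_left nhdsWithin_le_nhds
    · refine tendsto_nhdsWithin_iff.2 ⟨?_, eventually_nhdsWithin_of_forall fun t ht => ?_⟩
      · exact ((by fun_prop : Continuous fun t : ℝ => t - 1).tendsto' 1 0
          (sub_self _)).mono_left nhdsWithin_le_nhds
      · exact sub_neg.2 (show t < 1 from ht)
  have hregular : Tendsto (fun t : ℝ => ((t : ℂ) * z₀ * logDeriv g (t * z₀)).re) (𝓝[<] 1)
      (𝓝 (z₀ * logDeriv g z₀).re) := by
    have : ContinuousAt (fun z => (z * logDeriv g z).re) z₀ :=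
      continuous_re.continuousAt.comp
        (continuousAt_id.mul (hg.deriv.continuousAt.div hg.continuousAt hgz₀))
    exact this.tendsto.comp (hray.mono_right nhdsWithin_le_nhds)
  refine (hpole.atBot_add hregular).congr' ?_
  filter_upwards [hray.eventually (logDeriv_eventuallyEq_of_eventuallyEq_pow_smul hg hgz₀ hfg),
    self_mem_nhdsWithin] with t ht htlt
  have ht1 : (t : ℂ) - 1 ≠ 0 := by exact_mod_cast (sub_neg.2 htlt).ne
  rw [ht, mul_add, add_re]
  congr 1
  rw [show (t : ℂ) * z₀ - z₀ = (t - 1) * z₀ by ring]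
  field_simp
  rw [show (t : ℂ) * n / (t - 1) = ((t * n / (t - 1) : ℝ) : ℂ) by push_cast; ring, ofReal_re]
  ring

theorem ne_zero_of_forall_lt_re_mul_logDeriv {f : ℂ → ℂ} (hf : AnalyticOnNhd ℂ f (ball 0 1))
    (hf0 : f 0 ≠ 0) {c : ℝ} (hc : ∀ z ∈ ball (0 : ℂ) 1, c < (z * logDeriv f z).re) :
    ∀ z ∈ ball (0 : ℂ) 1, f z ≠ 0 := by
  intro z₀ hz₀ hfz₀
  have hz₀0 : z₀ ≠ 0 := by
    rintro rfl
    exact hf0 hfz₀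
  have hnz : ¬∀ᶠ z in 𝓝 z₀, f z = 0 := fun hev =>
    hf0 (hf.eqOn_zero_of_preconnected_of_eventuallyEq_zero (convex_ball 0 1).isPreconnected hz₀
      hev (mem_ball_self one_pos))
  have hray : ∀ᶠ t : ℝ in 𝓝[<] 1, (t : ℂ) * z₀ ∈ ball (0 : ℂ) 1 := by
    filter_upwards [Ioo_mem_nhdsLT zero_lt_one] with t ht
    rw [mem_ball_zero_iff, norm_mul, norm_real, Real.norm_of_nonneg ht.1.le]
    nlinarith [ht.1, ht.2, mem_ball_zero_iff.1 hz₀, norm_nonneg z₀]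
  obtain ⟨t, hlt, hmem⟩ := (((hf z₀ hz₀).tendsto_re_mul_logDeriv_atBot hz₀0 hfz₀ hnz).eventually
    (eventually_lt_atBot c) |>.and hray).exists
  exact (hc _ hmem).not_gt hlt

theorem HasDerivAt.log_norm {F : ℝ → ℂ} {d : ℂ} {t : ℝ} (hF : HasDerivAt F d t)
    (hne : F t ≠ 0) : HasDerivAt (fun s => Real.log ‖F s‖) (d / F t).re t := by
  have hsq : (fun s => Real.log ‖F s‖) = fun s => Real.log (‖F s‖ ^ 2) / 2 := by
    ext s; rw [Real.log_pow]; push_cast; ring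
  rw [hsq]
  refine ((hF.norm_sq.log (by positivity)).div_const 2).congr_deriv ?_
  rw [div_re, Complex.inner, Complex.sq_norm]
  simp only [mul_re, conj_re, conj_im]
  have : normSq (F t) ≠ 0 := by simpa using hne
  field_simp
  ring

theorem sub_le_sub_of_hasDerivAt_of_le {f g f' g' : ℝ → ℝ} {a b : ℝ} (hab : a ≤ b)
    (hf : ∀ x ∈ Icc a b, HasDerivAt f (f' x) x) (hg : ∀ x ∈ Icc a b, HasDerivAt g (g' x) x)
    (hle : ∀ x ∈ Ioo a b, f' x ≤ g' x) : f b - f a ≤ g b - g a := by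
  have hmono : MonotoneOn (fun x => g x - f x) (Icc a b) :=
    monotoneOn_of_hasDerivWithinAt_nonneg (convex_Icc a b)
      (fun x hx => ((hg x hx).sub (hf x hx)).continuousAt.continuousWithinAt)
      (fun x hx => ((hg x (interior_subset hx)).sub (hf x (interior_subset hx))).hasDerivWithinAt)
      (fun x hx => sub_nonneg.2 (hle x (by rwa [interior_Icc] at hx)))
  linarith [hmono (left_mem_Icc.2 hab) (right_mem_Icc.2 hab) hab]

theorem hasDerivAt_log_one_add_mul {r t : ℝ} (h : 0 < 1 + t * r) :
    HasDerivAt (fun s => Real.log (1 + s * r)) (r / (1 + t * r)) t := by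
  simpa using (((hasDerivAt_id t).mul_const r).const_add 1).log h.ne'

theorem log_norm_mem_Icc_of_re_mul_logDeriv_mem_Icc {F : ℂ → ℂ} {A : ℝ}
    (hF : DifferentiableOn ℂ F (ball 0 1)) (hF0 : F 0 = 1)
    (hne : ∀ z ∈ ball (0 : ℂ) 1, F z ≠ 0)
    (hbound : ∀ z ∈ ball (0 : ℂ) 1, (z * logDeriv F z).re ∈
      Icc (-(A * (‖z‖ / (1 + ‖z‖)))) (A * (‖z‖ / (1 - ‖z‖))))
    {z : ℂ} (hz : z ∈ ball (0 : ℂ) 1) :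
    Real.log ‖F z‖ ∈ Icc (-(A * Real.log (1 + ‖z‖))) (-(A * Real.log (1 - ‖z‖))) := by
  set r := ‖z‖
  have hr0 : 0 ≤ r := norm_nonneg z
  have hr1 : r < 1 := mem_ball_zero_iff.1 hz
  have hnorm : ∀ t : ℝ, 0 ≤ t → ‖(t : ℂ) * z‖ = t * r := fun t ht => by
    rw [norm_mul, norm_real, Real.norm_of_nonneg ht]
  have hray : ∀ t ∈ Icc (0 : ℝ) 1, (t : ℂ) * z ∈ ball (0 : ℂ) 1 := fun t ht => by
    rw [mem_ball_zero_iff, hnorm t ht.1]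
    nlinarith [ht.2]
  have hG : ∀ t ∈ Icc (0 : ℝ) 1, HasDerivAt (fun s : ℝ => Real.log ‖F (s * z)‖)
      (z * logDeriv F (t * z)).re t := fun t ht => by
    have hFt := (hF.differentiableAt (isOpen_ball.mem_nhds (hray t ht))).hasDerivAt
    have hcomp : HasDerivAt (fun w : ℂ => F (w * z)) (deriv F (t * z) * z) t :=
      hFt.comp_of_eq (t : ℂ) ((hasDerivAt_id _).mul_const z) (by simp) |>.congr_deriv (by simp)
    refine (hcomp.comp_ofReal.log_norm (hne _ (hray t ht))).congr_deriv ?_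
    rw [logDeriv_apply]
    ring_nf
  have hD : ∀ t ∈ Ioo (0 : ℝ) 1, (z * logDeriv F (t * z)).re ∈
      Icc (-(A * (r / (1 + t * r)))) (A * (r / (1 - t * r))) := fun t ht => by
    have hb := hbound _ (hray t (Ioo_subset_Icc_self ht))
    rw [hnorm t ht.1.le, show (t : ℂ) * z * logDeriv F (t * z) = t * (z * logDeriv F (t * z))
      by ring, re_ofReal_mul] at hb
    rw [show A * (t * r / (1 + t * r)) = t * (A * (r / (1 + t * r))) by ring,
      show A * (t * r / (1 - t * r)) = t * (A * (r / (1 - t * r))) by ring, ← mul_neg] at hb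
    exact ⟨le_of_mul_le_mul_left hb.1 ht.1, le_of_mul_le_mul_left hb.2 ht.1⟩
  have hlog0 : Real.log ‖F ((0 : ℝ) * z)‖ = 0 := by simp [hF0]
  have hlog1 : Real.log ‖F ((1 : ℝ) * z)‖ = Real.log ‖F z‖ := by simp
  constructor
  · have := sub_le_sub_of_hasDerivAt_of_le zero_le_one
      (f := fun t => -(A * Real.log (1 + t * r))) (g := fun t : ℝ => Real.log ‖F (t * z)‖)
      (fun t ht => ((hasDerivAt_log_one_add_mul (by nlinarith [ht.1])).const_mul A).neg) hG
      (fun t ht => (hD t ht).1)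
    simp only [hlog0, hlog1, zero_mul, add_zero, Real.log_one, mul_zero, neg_zero, one_mul] at this
    linarith
  · have := sub_le_sub_of_hasDerivAt_of_le zero_le_one
      (g := fun t => -(A * Real.log (1 + t * -r))) (f := fun t : ℝ => Real.log ‖F (t * z)‖) hG
      (fun t ht => ((hasDerivAt_log_one_add_mul (by nlinarith [ht.2])).const_mul A).neg)
      (fun t ht => by simpa [← sub_eq_add_neg, neg_div] using (hD t ht).2)
    simp only [hlog0, hlog1, zero_mul, add_zero, Real.log_one, mul_zero, neg_zero, one_mul,
      ← sub_eq_add_neg] at this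
    linarith

theorem stmt_11_general (α : ℝ) (hα : 0 ≤ α ∧ α < 1)
    (h : ℂ → ℂ)
    (hhA : AnalyticOnNhd ℂ h (ball (0 : ℂ) 1))
    (h1 : deriv h 0 = 1)
    (hconv : ∀ z ∈ ball (0 : ℂ) 1,
      α < (1 + z * deriv (deriv h) z / deriv h z).re) :
    ∀ z ∈ ball (0 : ℂ) 1,
      1 / (1 + ‖z‖) ^ (2 * (1 - α)) ≤ ‖deriv h z‖ ∧
      ‖deriv h z‖ ≤ 1 / (1 - ‖z‖) ^ (2 * (1 - α)) := by
  simp only [mul_div_assoc, ← logDeriv_apply] at hconv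
  have hh' : AnalyticOnNhd ℂ (deriv h) (ball 0 1) := hhA.deriv
  have hne : ∀ z ∈ ball (0 : ℂ) 1, deriv h z ≠ 0 :=
    ne_zero_of_forall_lt_re_mul_logDeriv hh' (by simp [h1]) (c := α - 1) fun z hz => by
      linarith [hconv z hz, add_re 1 (z * logDeriv (deriv h) z), one_re]
  have hp : DifferentiableOn ℂ (fun z => 1 + z * logDeriv (deriv h) z) (ball 0 1) :=
    (differentiableOn_id.mul (hh'.deriv.differentiableOn.div hh'.differentiableOn hne)).const_add 1
  intro z hz
  obtain ⟨hlow, hupp⟩ := log_norm_mem_Icc_of_re_mul_logDeriv_mem_Icc hh'.differentiableOn h1 hne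
    (fun w hw => by simpa using re_sub_one_mem_Icc_of_forall_lt_re hα.2 hp (by simp) hconv hw) hz
  have hexp : ∀ x : ℝ, 0 < x → 1 / x ^ (2 * (1 - α)) = Real.exp (-(2 * (1 - α) * Real.log x)) :=
    fun x hx => by rw [Real.rpow_def_of_pos hx, one_div, ← Real.exp_neg, mul_comm]
  rw [hexp _ (by positivity), hexp _ (by linarith [mem_ball_zero_iff.1 hz]),
    ← Real.exp_log (norm_pos_iff.2 (hne z hz))]
  exact ⟨Real.exp_le_exp.2 hlow, Real.exp_le_exp.2 hupp⟩

theorem stmt_11 (α : ℝ) (hα : 0 ≤ α ∧ α < 1)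
    (h : ℂ → ℂ)
    (hhA : AnalyticOnNhd ℂ h (ball (0 : ℂ) 1))
    (h0 : h 0 = 0) (h1 : deriv h 0 = 1)
    (hconv : ∀ z ∈ ball (0 : ℂ) 1,
      α < (1 + z * deriv (deriv h) z / deriv h z).re) :
    ∀ z ∈ ball (0 : ℂ) 1,
      1 / (1 + ‖z‖) ^ (2 * (1 - α)) ≤ ‖deriv h z‖ ∧
      ‖deriv h z‖ ≤ 1 / (1 - ‖z‖) ^ (2 * (1 - α)) :=
  stmt_11_general α hα h hhA h1 hconv
end

section
/- Let f = h + conj(g) where h is analytic on 𝔻 with h(0)=0, h'(0)=1, Re(1 + z h''/h') > α on 𝔻 (0 ≤ α < 1), and g'(z) = ζ z^n h'(z) with 0 ≤ |ζ| < 1/(2n-1), n ≥ 1, g(0)=0. Then for |z| = r < 1, |f(z)| ≤ ∫₀^r (1 + |ζ|ρⁿ)/(1-ρ)^{2(1-α)} dρ. -/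
/-!
Along a ray `t ↦ t u` with `‖u‖ = 1`, the hypothesis `Re (1 + z h''/h') > α` makes
`t ^ (2(1-α)) ‖h'(t u)‖²` nondecreasing (its derivative vanishes wherever `h'` does), so `h'` has
no zeros in the disk. Hence `p = h''/h'` is analytic, and Schwarz's lemma applied to
`z p / (z p + 2(1-α))` gives `‖p z‖ ≤ 2(1-α)/(1 - ‖z‖)`. This makes
`(1-t) ^ (2(1-α)) ‖h'(t u)‖` nonincreasing, which is the distortion bound
`‖h' z‖ ≤ (1 - ‖z‖) ^ (-2(1-α))`. Finally `‖h'‖ + ‖g'‖ = (1 + ‖ζ‖ ‖z‖ⁿ) ‖h'‖` is integrated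
along the segment `[0, z]`.
-/

open Complex Metric Set MeasureTheory
open scoped InnerProductSpace ComplexConjugate

theorem norm_le_div_one_sub_rpow_of_norm_deriv_le {E : Type*} [NormedAddCommGroup E]
    [InnerProductSpace ℝ E] {f f' : ℝ → E} {c r : ℝ} (hr₀ : 0 ≤ r) (hr : r < 1)
    (hf : ∀ t ∈ Icc 0 r, HasDerivAt f (f' t) t)
    (hf' : ∀ t ∈ Ioo 0 r, ‖f' t‖ ≤ c / (1 - t) * ‖f t‖) :
    ‖f r‖ ≤ ‖f 0‖ / (1 - r) ^ c := by
  have hpos : ∀ t ∈ Icc 0 r, 0 < 1 - t := fun t ht => by linarith [ht.2]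
  set W : ℝ → ℝ := fun t => (1 - t) ^ c
  have hW : ∀ t ∈ Icc 0 r, HasDerivAt W (-1 * c * (1 - t) ^ (c - 1)) t := fun t ht =>
    ((hasDerivAt_id t).const_sub 1).rpow_const (p := c) (Or.inl (hpos t ht).ne')
  have hD : ∀ t ∈ Icc 0 r, HasDerivAt (fun t => ‖f t‖ ^ 2 * W t ^ 2)
      (2 * ⟪f t, f' t⟫_ℝ * W t ^ 2 - ‖f t‖ ^ 2 * (2 * W t * (c * (1 - t) ^ (c - 1)))) t :=
    fun t ht => ((hf t ht).norm_sq.fun_mul ((hW t ht).fun_pow 2)).congr_deriv (by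
      simp only [Nat.cast_ofNat, Nat.add_one_sub_one, pow_one, neg_mul, one_mul, mul_neg]
      ring)
  have hanti : AntitoneOn (fun t => ‖f t‖ ^ 2 * W t ^ 2) (Icc 0 r) := by
    refine antitoneOn_of_hasDerivWithinAt_nonpos (convex_Icc 0 r)
      (fun t ht => (hD t ht).continuousAt.continuousWithinAt)
      (fun t ht => (hD t (interior_subset ht)).hasDerivWithinAt) fun t ht => ?_
    rw [interior_Icc] at ht
    have ht' := Ioo_subset_Icc_self ht
    have hW_eq : W t = (1 - t) ^ (c - 1) * (1 - t) := by
      simp only [W, Real.rpow_sub_one (hpos t ht').ne', div_mul_cancel₀ _ (hpos t ht').ne']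
    have hinner : ⟪f t, f' t⟫_ℝ * (1 - t) ≤ c * ‖f t‖ ^ 2 := by
      have h1 := hf' t ht
      rw [div_mul_eq_mul_div, le_div_iff₀ (hpos t ht')] at h1
      calc ⟪f t, f' t⟫_ℝ * (1 - t) ≤ ‖f t‖ * ‖f' t‖ * (1 - t) :=
            mul_le_mul_of_nonneg_right (real_inner_le_norm _ _) (hpos t ht').le
        _ ≤ ‖f t‖ * (c * ‖f t‖) := by
            rw [mul_assoc]; exact mul_le_mul_of_nonneg_left h1 (norm_nonneg _)
        _ = c * ‖f t‖ ^ 2 := by ring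
    have hWpos : 0 ≤ W t := Real.rpow_nonneg (hpos t ht').le c
    have hpow : 0 ≤ (1 - t) ^ (c - 1) := Real.rpow_nonneg (hpos t ht').le _
    rw [hW_eq] at hWpos ⊢
    nlinarith [mul_nonneg (mul_nonneg hWpos hpow) (sub_nonneg.2 hinner)]
  have hle := hanti ⟨le_rfl, hr₀⟩ ⟨hr₀, le_rfl⟩ hr₀
  simp only [W, sub_zero, Real.one_rpow, one_pow, mul_one, ← mul_pow] at hle
  rw [le_div_iff₀ (Real.rpow_pos_of_pos (by linarith) c)]
  exact (pow_le_pow_iff_left₀ (by positivity) (norm_nonneg _) two_ne_zero).1 hle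

theorem Complex.inner_eq_re_div_mul_sq_norm {w : ℂ} (w' : ℂ) (hw : w ≠ 0) :
    ⟪w, w'⟫_ℝ = (w' / w).re * ‖w‖ ^ 2 := by
  rw [Complex.inner, ← re_mul_ofReal, ofReal_pow, ← mul_conj']
  congr 1
  field_simp

theorem ne_zero_of_neg_le_re_mul_deriv_div {f f' : ℝ → ℂ} {b c : ℝ} (hb : 0 ≤ b)
    (hf : ∀ t ∈ Icc 0 b, HasDerivAt f (f' t) t)
    (hf' : ∀ t ∈ Ioo 0 b, f t ≠ 0 → -c ≤ (t * f' t / f t).re) (h0 : f 0 ≠ 0) :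
    f b ≠ 0 := by
  rcases hb.eq_or_lt with rfl | hb
  · exact h0
  obtain ⟨a, ⟨ha₀, hab⟩, ha⟩ : ∃ a ∈ Ioc 0 b, f a ≠ 0 :=
    ((((hf 0 ⟨le_rfl, hb.le⟩).continuousAt.eventually_ne h0).filter_mono
      nhdsWithin_le_nhds).and (Ioc_mem_nhdsGT hb)).exists.imp fun t ht => ⟨ht.2, ht.1⟩
  have hD : ∀ t ∈ Icc a b, HasDerivAt (fun t => ‖f t‖ ^ 2 * t ^ (2 * c))
      (2 * ⟪f t, f' t⟫_ℝ * t ^ (2 * c) + ‖f t‖ ^ 2 * (2 * c * t ^ (2 * c - 1))) t := fun t ht =>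
    ((hf t ⟨ha₀.le.trans ht.1, ht.2⟩).norm_sq.fun_mul
      ((hasDerivAt_id t).rpow_const (Or.inl (ha₀.trans_le ht.1).ne'))).congr_deriv (by simp)
  have hmono : MonotoneOn (fun t => ‖f t‖ ^ 2 * t ^ (2 * c)) (Icc a b) := by
    refine monotoneOn_of_hasDerivWithinAt_nonneg (convex_Icc a b)
      (fun t ht => (hD t ht).continuousAt.continuousWithinAt)
      (fun t ht => (hD t (interior_subset ht)).hasDerivWithinAt) fun t ht => ?_
    rw [interior_Icc] at ht
    have ht₀ : 0 < t := ha₀.trans ht.1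
    have hgrowth : 0 ≤ t * ⟪f t, f' t⟫_ℝ + c * ‖f t‖ ^ 2 := by
      by_cases hft : f t = 0
      · simp [hft]
      have hre := hf' t ⟨ht₀, ht.2⟩ hft
      rw [mul_div_assoc, re_ofReal_mul] at hre
      rw [Complex.inner_eq_re_div_mul_sq_norm _ hft]
      nlinarith [sq_nonneg ‖f t‖]
    have hpow : t ^ (2 * c) = t * t ^ (2 * c - 1) := by
      rw [Real.rpow_sub_one ht₀.ne', mul_div_cancel₀ _ ht₀.ne']
    rw [hpow]
    nlinarith [Real.rpow_nonneg ht₀.le (2 * c - 1)]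
  intro hfb
  have hDa : 0 < ‖f a‖ ^ 2 * a ^ (2 * c) := by
    have := norm_pos_iff.2 ha
    positivity
  have hDb := hmono ⟨le_rfl, hab⟩ ⟨hab, le_rfl⟩ hab
  simp only [hfb, norm_zero] at hDb
  linarith [hDb.trans_eq (by ring : (0 : ℝ) ^ 2 * b ^ (2 * c) = 0)]

theorem HasDerivAt.comp_ofReal_mul {F : ℂ → ℂ} {F' u : ℂ} {t : ℝ}
    (hF : HasDerivAt F F' (t * u)) : HasDerivAt (fun s : ℝ => F (s * u)) (F' * u) t := by
  simpa using (hF.comp (t : ℂ) ((hasDerivAt_id _).mul_const u)).comp_ofReal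

theorem ofReal_mul_exp_arg_mem_ball {z : ℂ} (hz : z ∈ ball (0 : ℂ) 1) :
    ∀ t ∈ Icc 0 ‖z‖, (t : ℂ) * exp (arg z * I) ∈ ball (0 : ℂ) 1 := by
  intro t ht
  rw [mem_ball_zero_iff, norm_mul, norm_exp_ofReal_mul_I, mul_one, norm_real,
    Real.norm_of_nonneg ht.1]
  exact ht.2.trans_lt (mem_ball_zero_iff.1 hz)

theorem norm_lt_norm_add_two_mul_of_neg_lt_re {w : ℂ} {c : ℝ} (hc : 0 < c) (hw : -c < w.re) :
    ‖w‖ < ‖w + 2 * c‖ := by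
  rw [← sq_lt_sq₀ (norm_nonneg _) (norm_nonneg _), Complex.sq_norm, Complex.sq_norm,
    normSq_apply, normSq_apply]
  simp only [add_re, add_im, mul_re, mul_im, ofReal_re, ofReal_im, re_ofNat, im_ofNat]
  nlinarith

theorem dslope_id_mul {q : ℂ → ℂ} (hq : DifferentiableAt ℂ q 0) (z : ℂ) :
    dslope (fun w => w * q w) 0 z = q z := by
  rcases eq_or_ne z 0 with rfl | hz
  · rw [dslope_same]
    simpa using ((hasDerivAt_id' (0 : ℂ)).fun_mul hq.hasDerivAt).deriv
  · rw [dslope_of_ne _ hz, slope_def_field, zero_mul, sub_zero, sub_zero,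
      mul_div_cancel_left₀ _ hz]

section ConvexOfOrder

variable {α : ℝ} {h : ℂ → ℂ}

theorem deriv_ne_zero_of_lt_re (hh : AnalyticOnNhd ℂ h (ball 0 1)) (h1 : deriv h 0 ≠ 0)
    (hconv : ∀ z ∈ ball (0 : ℂ) 1, α < (1 + z * deriv (deriv h) z / deriv h z).re)
    {z : ℂ} (hz : z ∈ ball (0 : ℂ) 1) : deriv h z ≠ 0 := by
  have hray := ofReal_mul_exp_arg_mem_ball hz
  have key := ne_zero_of_neg_le_re_mul_deriv_div (f := fun t : ℝ => deriv h (t * exp (arg z * I)))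
    (c := 1 - α) (norm_nonneg z)
    (fun t ht => (hh.deriv _ (hray t ht)).differentiableAt.hasDerivAt.comp_ofReal_mul)
    (fun t ht _ => ?_) (by simpa using h1)
  · rwa [norm_mul_exp_arg_mul_I] at key
  have := hconv _ (hray t (Ioo_subset_Icc_self ht))
  rw [add_re, one_re] at this
  rw [← mul_assoc, mul_right_comm (t : ℂ)]
  linarith

theorem norm_deriv_deriv_div_deriv_le (hα : α < 1) (hh : AnalyticOnNhd ℂ h (ball 0 1))
    (hne : ∀ z ∈ ball (0 : ℂ) 1, deriv h z ≠ 0)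
    (hconv : ∀ z ∈ ball (0 : ℂ) 1, α < (1 + z * deriv (deriv h) z / deriv h z).re)
    {z : ℂ} (hz : z ∈ ball (0 : ℂ) 1) :
    ‖deriv (deriv h) z / deriv h z‖ ≤ 2 * (1 - α) / (1 - ‖z‖) := by
  set c := 1 - α
  have hc : 0 < c := sub_pos.2 hα
  set p : ℂ → ℂ := fun w => deriv (deriv h) w / deriv h w
  have hlt : ∀ w ∈ ball (0 : ℂ) 1, ‖w * p w‖ < ‖w * p w + 2 * c‖ := fun w hw =>
    norm_lt_norm_add_two_mul_of_neg_lt_re hc (by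
      have := hconv w hw
      rw [add_re, one_re] at this
      simp only [p, c, ← mul_div_assoc]
      linarith)
  have hden : ∀ w ∈ ball (0 : ℂ) 1, w * p w + 2 * c ≠ 0 := fun w hw =>
    norm_pos_iff.1 ((norm_nonneg _).trans_lt (hlt w hw))
  set q : ℂ → ℂ := fun w => p w / (w * p w + 2 * c)
  have hq : AnalyticOnNhd ℂ q (ball 0 1) := by
    have hp : AnalyticOnNhd ℂ p (ball 0 1) := hh.deriv.deriv.div hh.deriv hne
    exact hp.div ((analyticOnNhd_id.mul hp).add analyticOnNhd_const) hden
  -- Schwarz's lemma for `w ↦ w q(w) = w p(w) / (w p(w) + 2c)`, a self-map of the disk.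
  have hqz : ‖q z‖ ≤ 1 := by
    have hmaps : MapsTo (fun w => w * q w) (ball 0 1) (closedBall ((fun w => w * q w) 0) 1) := by
      intro w hw
      simp only [mem_closedBall, dist_eq_norm, q, zero_mul, zero_add, zero_div, sub_zero,
        ← mul_div_assoc, norm_div]
      exact div_le_one_of_le₀ (hlt w hw).le (norm_nonneg _)
    have := Complex.norm_dslope_le_div_of_mapsTo_ball
      (analyticOnNhd_id.mul hq).differentiableOn hmaps hz
    rwa [dslope_id_mul (hq 0 (mem_ball_self one_pos)).differentiableAt, div_one] at this
  have hid : p z * (1 - z * q z) = 2 * c * q z := by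
    have hpq : p z = (z * p z + 2 * c) * q z := (mul_div_cancel₀ _ (hden z hz)).symm
    linear_combination hpq
  rw [le_div_iff₀ (sub_pos.2 (mem_ball_zero_iff.1 hz))]
  calc ‖p z‖ * (1 - ‖z‖) ≤ ‖p z‖ * ‖1 - z * q z‖ := by
        gcongr
        calc 1 - ‖z‖ ≤ 1 - ‖z * q z‖ := by
              rw [norm_mul]; nlinarith [norm_nonneg z, norm_nonneg (q z)]
          _ ≤ ‖1 - z * q z‖ := by simpa using norm_sub_norm_le (1 : ℂ) (z * q z)
    _ = 2 * c * ‖q z‖ := by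
        rw [← norm_mul, hid, norm_mul, norm_mul, norm_real, Real.norm_of_nonneg hc.le]; norm_num
    _ ≤ 2 * c := by nlinarith

theorem norm_deriv_le_of_lt_re (hα : α < 1) (hh : AnalyticOnNhd ℂ h (ball 0 1))
    (h1 : deriv h 0 = 1)
    (hconv : ∀ z ∈ ball (0 : ℂ) 1, α < (1 + z * deriv (deriv h) z / deriv h z).re)
    {z : ℂ} (hz : z ∈ ball (0 : ℂ) 1) :
    ‖deriv h z‖ ≤ 1 / (1 - ‖z‖) ^ (2 * (1 - α)) := by
  have hne : ∀ w ∈ ball (0 : ℂ) 1, deriv h w ≠ 0 := fun w hw =>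
    deriv_ne_zero_of_lt_re hh (by simp [h1]) hconv hw
  have hray := ofReal_mul_exp_arg_mem_ball hz
  have key := norm_le_div_one_sub_rpow_of_norm_deriv_le
    (f := fun t : ℝ => deriv h (t * exp (arg z * I))) (c := 2 * (1 - α))
    (norm_nonneg z) (mem_ball_zero_iff.1 hz)
    (fun t ht => (hh.deriv _ (hray t ht)).differentiableAt.hasDerivAt.comp_ofReal_mul)
    (fun t ht => ?_)
  · simpa [h1, norm_mul_exp_arg_mul_I] using key
  have hw := hray t (Ioo_subset_Icc_self ht)
  have hbound := norm_deriv_deriv_div_deriv_le hα hh hne hconv hw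
  rw [norm_div, div_le_iff₀ (norm_pos_iff.2 (hne _ hw))] at hbound
  simpa [norm_mul, norm_exp_ofReal_mul_I, abs_of_pos ht.1] using hbound

end ConvexOfOrder

theorem norm_add_conj_le_integral {h g : ℂ → ℂ} (hh : DifferentiableOn ℂ h (ball 0 1))
    (hg : DifferentiableOn ℂ g (ball 0 1)) (h0 : h 0 = 0) (g0 : g 0 = 0) {B : ℝ → ℝ}
    (hbound : ∀ w ∈ ball (0 : ℂ) 1, ‖deriv h w‖ + ‖deriv g w‖ ≤ B ‖w‖)
    {z : ℂ} (hz : z ∈ ball (0 : ℂ) 1) (hB : IntervalIntegrable B volume 0 ‖z‖) :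
    ‖h z + conj (g z)‖ ≤ ∫ ρ in (0 : ℝ)..‖z‖, B ρ := by
  set u := exp (arg z * I)
  have hray := ofReal_mul_exp_arg_mem_ball hz
  have hdiff : ∀ {F : ℂ → ℂ}, DifferentiableOn ℂ F (ball 0 1) → ∀ t ∈ Icc 0 ‖z‖,
      HasDerivAt (fun s : ℝ => F (s * u)) (deriv F (t * u) * u) t := fun hF t ht =>
    (hF.differentiableAt (isOpen_ball.mem_nhds (hray t ht))).hasDerivAt.comp_ofReal_mul
  set F : ℝ → ℂ := fun t => h (t * u) + conj (g (t * u))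
  have hF : ∀ t ∈ Icc 0 ‖z‖,
      HasDerivAt F (deriv h (t * u) * u + conj (deriv g (t * u) * u)) t := fun t ht =>
    (hdiff hh t ht).add (hdiff hg t ht).star
  have key := norm_sub_le_integral_of_norm_deriv_le_of_le (norm_nonneg z)
    (fun t ht => (hF t ht).continuousAt.continuousWithinAt)
    (fun t ht => (hF t (Ioo_subset_Icc_self ht)).differentiableAt.differentiableWithinAt)
    (ae_of_all _ fun t ht => ?_) hB
  · simpa [F, u, h0, g0, norm_mul_exp_arg_mul_I] using key
  rw [(hF t (Ioo_subset_Icc_self ht)).deriv]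
  refine (norm_add_le _ _).trans ?_
  simpa [u, norm_mul, norm_exp_ofReal_mul_I, abs_of_pos ht.1] using
    hbound _ (hray t (Ioo_subset_Icc_self ht))

theorem stmt_12_general (α : ℝ) (hα : 0 ≤ α ∧ α < 1)
    (ζ : ℂ) (n : ℕ)
    (h g : ℂ → ℂ)
    (hhA : AnalyticOnNhd ℂ h (ball (0 : ℂ) 1))
    (hgA : AnalyticOnNhd ℂ g (ball (0 : ℂ) 1))
    (h0 : h 0 = 0) (h1 : deriv h 0 = 1) (g0 : g 0 = 0)
    (hconv : ∀ z ∈ ball (0 : ℂ) 1,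
      α < (1 + z * deriv (deriv h) z / deriv h z).re)
    (hrel : ∀ z ∈ ball (0 : ℂ) 1, deriv g z = ζ * z ^ n * deriv h z) :
    ∀ z ∈ ball (0 : ℂ) 1,
      ‖h z + starRingEnd ℂ (g z)‖ ≤
        ∫ ρ in (0 : ℝ)..(‖z‖),
          (1 + ‖ζ‖ * ρ ^ n) / (1 - ρ) ^ (2 * (1 - α)) := by
  intro z hz
  refine norm_add_conj_le_integral hhA.differentiableOn hgA.differentiableOn h0 g0
    (fun w hw => ?_) hz ?_
  · rw [hrel w hw, norm_mul, norm_mul, norm_pow]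
    calc ‖deriv h w‖ + ‖ζ‖ * ‖w‖ ^ n * ‖deriv h w‖ = (1 + ‖ζ‖ * ‖w‖ ^ n) * ‖deriv h w‖ := by ring
      _ ≤ (1 + ‖ζ‖ * ‖w‖ ^ n) * (1 / (1 - ‖w‖) ^ (2 * (1 - α))) := by
          gcongr; exact norm_deriv_le_of_lt_re hα.2 hhA h1 hconv hw
      _ = (1 + ‖ζ‖ * ‖w‖ ^ n) / (1 - ‖w‖) ^ (2 * (1 - α)) := by ring
  · refine ContinuousOn.intervalIntegrable fun ρ hρ => ?_
    rw [uIcc_of_le (norm_nonneg z)] at hρ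
    have : 0 < 1 - ρ := by linarith [hρ.2, mem_ball_zero_iff.1 hz]
    exact ((continuousAt_const.add (continuousAt_const.mul (continuousAt_id.pow n))).div
      ((continuousAt_const.sub continuousAt_id).rpow_const (Or.inl this.ne'))
      (Real.rpow_pos_of_pos this _).ne').continuousWithinAt

theorem stmt_12 (α : ℝ) (hα : 0 ≤ α ∧ α < 1)
    (ζ : ℂ) (n : ℕ) (hn : 1 ≤ n) (hζ : ‖ζ‖ < 1 / (2 * n - 1))
    (h g : ℂ → ℂ)
    (hhA : AnalyticOnNhd ℂ h (ball (0 : ℂ) 1))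
    (hgA : AnalyticOnNhd ℂ g (ball (0 : ℂ) 1))
    (h0 : h 0 = 0) (h1 : deriv h 0 = 1) (g0 : g 0 = 0)
    (hconv : ∀ z ∈ ball (0 : ℂ) 1,
      α < (1 + z * deriv (deriv h) z / deriv h z).re)
    (hrel : ∀ z ∈ ball (0 : ℂ) 1, deriv g z = ζ * z ^ n * deriv h z) :
    ∀ z ∈ ball (0 : ℂ) 1,
      ‖h z + starRingEnd ℂ (g z)‖ ≤
        ∫ ρ in (0 : ℝ)..(‖z‖),
          (1 + ‖ζ‖ * ρ ^ n) / (1 - ρ) ^ (2 * (1 - α)) :=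
  stmt_12_general α hα ζ n h g hhA hgA h0 h1 g0 hconv hrel
end

section
/- Let f = h + conj(g) with h(0)=0, h'(0)=1, Re(1 + z h''/h') > α on 𝔻 (0 ≤ α < 1), and g'(z) = ζ z^n h'(z), n ≥ 1. Then for 0 < r < 1, 2π ∫₀^r ρ(1 - |ζ|²ρ^{2n})/(1+ρ)^{4(1-α)} dρ ≤ ∬_{|z|<r} (|h'(z)|² - |g'(z)|²) dx dy ≤ 2π ∫₀^r ρ(1 - |ζ|²ρ^{2n})/(1-ρ)^{4(1-α)} dρ. -/
/-!
Write `p = z h''/h'`, so that the hypothesis reads `Re p > α - 1` on the disc. First, `h'` has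
no zeros: near a zero `z₀ ≠ 0` of order `k ≥ 1`, `p(z) ≈ k z₀ / (z - z₀)` has arbitrarily
negative real part. Next, `p / (p + 2(1 - α))` maps the
disc into itself and fixes `0`, so Schwarz's lemma gives `|p(z)| ≤ |z| |p(z) + 2(1 - α)|`, which
confines `Re p(z)` to `[-2(1 - α)|z|/(1 + |z|), 2(1 - α)|z|/(1 - |z|)]`. As
`t d/dt |h'(tz)|² = 2 Re p(tz) |h'(tz)|²`, the integrating factors `(1 ± t|z|)^(4(1 - α))` make
`|h'(tz)|² (1 ± t|z|)^(4(1 - α))` monotone in `t`, which yields the distortion bounds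
`(1 + |z|)^(-4(1 - α)) ≤ |h'(z)|² ≤ (1 - |z|)^(-4(1 - α))`. Finally `g' = ζ zⁿ h'` turns the
Jacobian into `(1 - |ζ|² |z|^(2n)) |h'(z)|²` with a nonnegative weight, and integrating the
distortion bounds in polar coordinates gives the claim.
-/

open Complex ComplexConjugate Metric MeasureTheory Set Filter Topology

theorem AnalyticAt.tendsto_sub_mul_logDeriv {f : ℂ → ℂ} {x : ℂ} {k : ℕ}
    (hf : AnalyticAt ℂ f x) (hk : analyticOrderAt f x = k) :
    Tendsto (fun w => (w - x) * logDeriv f w) (𝓝[≠] x) (𝓝 k) := by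
  obtain ⟨u, hu, hux, hfu⟩ := hf.analyticOrderAt_eq_natCast.mp hk
  have hlog : ∀ᶠ w in 𝓝[≠] x,
      (k : ℂ) + (w - x) * logDeriv u w = (w - x) * logDeriv f w := by
    filter_upwards [self_mem_nhdsWithin, nhdsWithin_le_nhds hfu.eventually_nhds,
      nhdsWithin_le_nhds (hu.continuousAt.eventually_ne hux),
      nhdsWithin_le_nhds hu.eventually_analyticAt] with w hwx hfw huw hua
    have hwx : w - x ≠ 0 := sub_ne_zero.mpr hwx
    rw [logDeriv_congr_nhds (hfw.mono fun y hy => hy.trans (smul_eq_mul _ _)) |>.eq_of_nhds,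
      logDeriv_mul (f := fun y => (y - x) ^ k) w (pow_ne_zero _ hwx) huw (by fun_prop)
        hua.differentiableAt,
      logDeriv_fun_pow (by fun_prop)]
    simp only [logDeriv_apply, deriv_sub_const, deriv_id'']
    field_simp
  have hlim : Tendsto (fun w => (k : ℂ) + (w - x) * logDeriv u w) (𝓝 x) (𝓝 k) := by
    have hcont : ContinuousAt (fun w => (k : ℂ) + (w - x) * logDeriv u w) x :=
      continuousAt_const.add ((continuousAt_id.sub continuousAt_const).mul
        (hu.deriv.continuousAt.div hu.continuousAt hux))
    simpa using hcont.tendsto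
  exact (hlim.mono_left nhdsWithin_le_nhds).congr' hlog

theorem AnalyticAt.frequently_re_mul_logDeriv_lt {f : ℂ → ℂ} {x : ℂ} (hf : AnalyticAt ℂ f x)
    (hx : x ≠ 0) (hfx : f x = 0) (hfin : analyticOrderAt f x ≠ ⊤) (M : ℝ) :
    ∃ᶠ w in 𝓝 x, (w * logDeriv f w).re < M := by
  lift analyticOrderAt f x to ℕ using hfin with k hk
  have hk0 : (0 : ℝ) < k := by
    have : k ≠ 0 := by exact_mod_cast hk ▸ hf.analyticOrderAt_ne_zero.mpr hfx
    positivity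
  -- approach `x` radially from inside: `(1 - ε) x = (1 - ε⁻¹) ((1 - ε) x - x)`
  set γ : ℝ → ℂ := fun ε => (1 - ε) * x
  have hγ : Tendsto γ (𝓝[>] 0) (𝓝[≠] x) := by
    refine tendsto_nhdsWithin_iff.mpr ⟨?_, ?_⟩
    · have : Continuous γ := by fun_prop
      simpa [γ] using (this.tendsto 0).mono_left nhdsWithin_le_nhds
    · filter_upwards [self_mem_nhdsWithin] with ε (hε : 0 < ε)
      simp [γ, sub_mul, hx, hε.ne']
  have hfactor : Tendsto (fun ε : ℝ => 1 - ε⁻¹) (𝓝[>] 0) atBot :=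
    tendsto_atBot_add_const_left _ _ (tendsto_neg_atTop_atBot.comp tendsto_inv_nhdsGT_zero)
  have hres : Tendsto (fun ε => ((γ ε - x) * logDeriv f (γ ε)).re) (𝓝[>] 0) (𝓝 k) :=
    (continuous_re.tendsto _).comp ((hf.tendsto_sub_mul_logDeriv hk.symm).comp hγ)
  have hlim := (hfactor.atBot_mul_pos hk0 hres).eventually_lt_atBot M
  refine hγ.mono_right nhdsWithin_le_nhds |>.frequently (Eventually.frequently ?_)
  filter_upwards [hlim, self_mem_nhdsWithin] with ε hε (hε0 : 0 < ε)
  have hε0 : (ε : ℂ) ≠ 0 := by exact_mod_cast hε0.ne'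
  have hγε : γ ε * logDeriv f (γ ε) =
      ((1 - ε⁻¹ : ℝ) : ℂ) * ((γ ε - x) * logDeriv f (γ ε)) := by
    simp only [γ]; push_cast; field_simp; ring
  rwa [hγε, re_ofReal_mul]

theorem AnalyticOnNhd.ne_zero_of_re_mul_logDeriv_gt {f : ℂ → ℂ} {U : Set ℂ} {M : ℝ}
    (hf : AnalyticOnNhd ℂ f U) (hU : IsOpen U) (hUc : IsPreconnected U) (h0U : 0 ∈ U)
    (hf0 : f 0 ≠ 0) (hM : ∀ z ∈ U, M < (z * logDeriv f z).re) {z : ℂ} (hz : z ∈ U) :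
    f z ≠ 0 := by
  intro hfz
  have hz0 : z ≠ 0 := by rintro rfl; exact hf0 hfz
  have hfin : analyticOrderAt f z ≠ ⊤ :=
    hf.analyticOrderAt_ne_top_of_isPreconnected hUc h0U hz
      (by simp [(hf 0 h0U).analyticOrderAt_eq_zero.mpr hf0])
  obtain ⟨w, hlt, hwU⟩ :=
    ((hf z hz).frequently_re_mul_logDeriv_lt hz0 hfz hfin M).and_eventually
      (hU.mem_nhds hz) |>.exists
  exact (hM w hwU).not_gt hlt

theorem Complex.norm_lt_norm_add_ofReal {w : ℂ} {b : ℝ} (hb : 0 < b) (hw : -(b / 2) < w.re) :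
    ‖w‖ < ‖w + b‖ := by
  refine pow_lt_pow_iff_left₀ (norm_nonneg _) (norm_nonneg _) two_ne_zero |>.mp ?_
  simp only [Complex.sq_norm, normSq_apply, add_re, add_im, ofReal_re, ofReal_im]
  nlinarith

theorem Complex.norm_le_norm_mul_norm_add_of_re_gt {p : ℂ → ℂ} {b : ℝ}
    (hp : DifferentiableOn ℂ p (ball 0 1)) (hp0 : p 0 = 0)
    (hre : ∀ z ∈ ball (0 : ℂ) 1, -(b / 2) < (p z).re) {z : ℂ} (hz : z ∈ ball (0 : ℂ) 1) :
    ‖p z‖ ≤ ‖z‖ * ‖p z + b‖ := by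
  have hb : 0 < b := by simpa [hp0] using hre 0 (mem_ball_self one_pos)
  have hlt : ∀ w ∈ ball (0 : ℂ) 1, ‖p w‖ < ‖p w + b‖ := fun w hw =>
    norm_lt_norm_add_ofReal hb (hre w hw)
  have hne : ∀ w ∈ ball (0 : ℂ) 1, p w + b ≠ 0 := fun w hw =>
    norm_pos_iff.mp ((norm_nonneg _).trans_lt (hlt w hw))
  -- the Cayley-type transform `p / (p + b)` sends the half-plane `re > -b/2` into the unit disc
  have hschwarz := norm_le_norm_of_mapsTo_ball (f := fun w => p w / (p w + b))
    (hp.div (hp.add_const _) hne) (fun w hw => ?_) (by simp [hp0]) (mem_ball_zero_iff.mp hz)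
  · rwa [norm_div, div_le_iff₀ (norm_pos_iff.mpr (hne z hz))] at hschwarz
  · rw [mem_closedBall_zero_iff, norm_div, div_le_one (norm_pos_iff.mpr (hne w hw))]
    exact (hlt w hw).le

theorem Complex.re_bounds_of_norm_le_mul_norm_add {a : ℂ} {b ρ : ℝ} (hb : 0 ≤ b) (hρ : 0 ≤ ρ)
    (hρ1 : ρ < 1) (h : ‖a‖ ≤ ρ * ‖a + b‖) :
    -(b * ρ) ≤ (1 + ρ) * a.re ∧ (1 - ρ) * a.re ≤ b * ρ := by
  have hsq : ‖a + b‖ ^ 2 = ‖a‖ ^ 2 + 2 * b * a.re + b ^ 2 := by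
    simp only [Complex.sq_norm, normSq_apply, add_re, add_im, ofReal_re, ofReal_im]; ring
  have hre : (1 - ρ ^ 2) * a.re ^ 2 ≤ (1 - ρ ^ 2) * ‖a‖ ^ 2 :=
    mul_le_mul_of_nonneg_left (by nlinarith [sq_norm_sub_sq_re a, sq_nonneg a.im]) (by nlinarith)
  have h2 : ‖a‖ ^ 2 ≤ ρ ^ 2 * ‖a + b‖ ^ 2 := by
    rw [← mul_pow]; exact pow_le_pow_left₀ (norm_nonneg a) h 2
  -- squaring `h` confines `a.re` between the two roots of a quadratic
  have hprod : ((1 - ρ) * a.re - b * ρ) * ((1 + ρ) * a.re + b * ρ) ≤ 0 := by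
    nlinarith
  have hbρ : 0 ≤ b * ρ := mul_nonneg hb hρ
  constructor <;> by_contra! hlt
  · nlinarith [mul_pos (by nlinarith : 0 < b * ρ - (1 - ρ) * a.re)
      (by linarith : 0 < -((1 + ρ) * a.re + b * ρ))]
  · nlinarith [mul_pos (by linarith : 0 < (1 - ρ) * a.re - b * ρ)
      (by nlinarith : 0 < (1 + ρ) * a.re + b * ρ)]

theorem monotoneOn_mul_one_add_mul_rpow {G G' : ℝ → ℝ} {a b c β : ℝ}
    (hpos : ∀ t ∈ Icc a b, 0 < 1 + c * t) (hGc : ContinuousOn G (Icc a b))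
    (hG : ∀ t ∈ Ioo a b, HasDerivAt G (G' t) t)
    (h : ∀ t ∈ Ioo a b, 0 ≤ (1 + c * t) * G' t + c * β * G t) :
    MonotoneOn (fun t => G t * (1 + c * t) ^ β) (Icc a b) := by
  have hlin : Continuous fun t => 1 + c * t := by fun_prop
  refine monotoneOn_of_hasDerivWithinAt_nonneg
    (f' := fun t => (1 + c * t) ^ (β - 1) * ((1 + c * t) * G' t + c * β * G t)) (convex_Icc a b)
    (hGc.mul (hlin.continuousOn.rpow_const fun t ht => Or.inl (hpos t ht).ne'))
    (fun t ht => ?_) (fun t ht => ?_) <;>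
    rw [interior_Icc] at ht <;>
    have hne := (hpos t (Ioo_subset_Icc_self ht)).ne'
  · refine HasDerivAt.hasDerivWithinAt <| ((hG t ht).mul <|
      (((hasDerivAt_id' t).const_mul c).const_add 1).rpow_const (Or.inl hne)).congr_deriv ?_
    rw [Real.rpow_sub_one hne]
    field_simp
  · exact mul_nonneg (Real.rpow_nonneg (hpos t (Ioo_subset_Icc_self ht)).le _) (h t ht)

theorem hasDerivAt_norm_sq_comp_ofReal_mul {f : ℂ → ℂ} {z : ℂ} {t : ℝ}
    (hf : DifferentiableAt ℂ f (t * z)) (ht : t ≠ 0) (hft : f (t * z) ≠ 0) :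
    HasDerivAt (fun s : ℝ => ‖f (s * z)‖ ^ 2)
      (2 * (t * z * logDeriv f (t * z)).re * ‖f (t * z)‖ ^ 2 / t) t := by
  refine (hf.hasDerivAt.comp (t : ℂ) ((hasDerivAt_id (t : ℂ)).mul_const z)).comp_ofReal.norm_sq
    |>.congr_deriv ?_
  have key : t * z * logDeriv f (t * z) * (‖f (t * z)‖ ^ 2 : ℝ) =
      t * (deriv f (t * z) * z * conj (f (t * z))) := by
    push_cast
    rw [← mul_conj', logDeriv_apply]
    field_simp
  rw [mul_assoc 2, ← re_mul_ofReal, mul_div_assoc, ← div_ofReal_re, key,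
    mul_div_cancel_left₀ _ (ofReal_ne_zero.mpr ht), Complex.inner]
  simp

theorem norm_sq_bounds_of_re_mul_logDeriv_bounds {f : ℂ → ℂ} {b : ℝ}
    (hf : DifferentiableOn ℂ f (ball 0 1)) (hne : ∀ w ∈ ball (0 : ℂ) 1, f w ≠ 0)
    (hp : ∀ w ∈ ball (0 : ℂ) 1, -(b * ‖w‖) ≤ (1 + ‖w‖) * (w * logDeriv f w).re ∧
      (1 - ‖w‖) * (w * logDeriv f w).re ≤ b * ‖w‖)
    {z : ℂ} (hz : z ∈ ball (0 : ℂ) 1) :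
    ‖f 0‖ ^ 2 ≤ ‖f z‖ ^ 2 * (1 + ‖z‖) ^ (2 * b) ∧
      ‖f z‖ ^ 2 * (1 - ‖z‖) ^ (2 * b) ≤ ‖f 0‖ ^ 2 := by
  set ρ := ‖z‖
  have hρ : ρ < 1 := mem_ball_zero_iff.mp hz
  set G : ℝ → ℝ := fun t => ‖f (t * z)‖ ^ 2
  set P : ℝ → ℝ := fun t => (t * z * logDeriv f (t * z)).re
  have hnorm : ∀ t ∈ Icc (0 : ℝ) 1, ‖(t : ℂ) * z‖ = t * ρ := fun t ht => by
    rw [norm_mul, norm_real, Real.norm_of_nonneg ht.1]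
  have hmem : ∀ t ∈ Icc (0 : ℝ) 1, (t : ℂ) * z ∈ ball (0 : ℂ) 1 := fun t ht => by
    rw [mem_ball_zero_iff, hnorm t ht]; nlinarith [ht.1, ht.2, norm_nonneg z]
  have hGc : ContinuousOn G (Icc 0 1) :=
    (hf.continuousOn.comp (by fun_prop) hmem).norm.pow 2
  have hG : ∀ t ∈ Ioo (0 : ℝ) 1, HasDerivAt G (2 * P t * G t / t) t := fun t ht =>
    hasDerivAt_norm_sq_comp_ofReal_mul
      (hf.differentiableAt (isOpen_ball.mem_nhds (hmem t (Ioo_subset_Icc_self ht))))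
      ht.1.ne' (hne _ (hmem t (Ioo_subset_Icc_self ht)))
  have hPt : ∀ t ∈ Ioo (0 : ℝ) 1,
      -(b * (t * ρ)) ≤ (1 + t * ρ) * P t ∧ (1 - t * ρ) * P t ≤ b * (t * ρ) := fun t ht => by
    simpa only [hnorm t (Ioo_subset_Icc_self ht)] using hp _ (hmem t (Ioo_subset_Icc_self ht))
  have hlow := monotoneOn_mul_one_add_mul_rpow (c := ρ) (β := 2 * b)
    (fun t ht => by nlinarith [ht.1, norm_nonneg z]) hGc hG fun t ht => by
      have key : (1 + ρ * t) * (2 * P t * G t / t) + ρ * (2 * b) * G t =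
          2 * G t / t * ((1 + t * ρ) * P t + b * (t * ρ)) := by
        field_simp [ht.1.ne']
      rw [key]
      exact mul_nonneg (div_nonneg (by positivity) ht.1.le) (by linarith [(hPt t ht).1])
  have hupp := monotoneOn_mul_one_add_mul_rpow (G := fun t => -G t) (c := -ρ) (β := 2 * b)
    (fun t ht => by nlinarith [ht.2, norm_nonneg z]) hGc.neg (fun t ht => (hG t ht).neg)
    fun t ht => by
      have key : (1 + -ρ * t) * -(2 * P t * G t / t) + -ρ * (2 * b) * -G t =
          2 * G t / t * (b * (t * ρ) - (1 - t * ρ) * P t) := by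
        field_simp [ht.1.ne']
        ring
      rw [key]
      exact mul_nonneg (div_nonneg (by positivity) ht.1.le) (by linarith [(hPt t ht).2])
  have h0 : (0 : ℝ) ∈ Icc 0 1 := left_mem_Icc.mpr zero_le_one
  have h1 : (1 : ℝ) ∈ Icc 0 1 := right_mem_Icc.mpr zero_le_one
  constructor
  · simpa [G] using hlow h0 h1 zero_le_one
  · simpa [G, ← sub_eq_add_neg] using hupp h0 h1 zero_le_one

theorem integral_ball_comp_norm (φ : ℝ → ℝ) {r : ℝ} (hr : 0 ≤ r) :
    ∫ z in ball (0 : ℂ) r, φ ‖z‖ = 2 * Real.pi * ∫ y in (0 : ℝ)..r, y * φ y := by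
  have hball : ball (0 : ℂ) r = (‖·‖) ⁻¹' Iio r := by ext; simp
  have hvol : volume.real (ball (0 : ℂ) 1) = Real.pi := by
    simp [measureReal_def, Complex.volume_ball]
  have := integral_fun_norm_addHaar (volume : Measure ℂ) ((Iio r).indicator φ)
  rw [← integral_indicator measurableSet_ball, hball]
  simp_rw [← Set.indicator_comp_right, Function.comp_def] at this
  rw [this, Complex.finrank_real_complex, hvol]
  have hind : (fun y : ℝ => y * (Iio r).indicator φ y) =
      (Iio r).indicator (fun y => y * φ y) := by
    ext y; rw [indicator_mul_right]
  simp only [Nat.add_one_sub_one, pow_one, smul_eq_mul, nsmul_eq_mul, hind]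
  rw [setIntegral_indicator measurableSet_Iio, Ioi_inter_Iio,
    intervalIntegral.integral_of_le hr, integral_Ioc_eq_integral_Ioo]
  ring

theorem ContinuousOn.integrableOn_ball_comp_norm {φ : ℝ → ℝ} {r : ℝ}
    (hφ : ContinuousOn φ (Icc 0 r)) :
    IntegrableOn (fun z : ℂ => φ ‖z‖) (ball 0 r) :=
  ((hφ.comp continuous_norm.continuousOn fun z hz =>
    ⟨norm_nonneg z, mem_closedBall_zero_iff.mp hz⟩).integrableOn_compact
      (isCompact_closedBall 0 r)).mono_set ball_subset_closedBall

theorem integral_ball_bounds_of_radial_bounds {F : ℂ → ℝ} {φ ψ : ℝ → ℝ} {r : ℝ} (hr : 0 ≤ r)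
    (hφ : ContinuousOn φ (Icc 0 r)) (hψ : ContinuousOn ψ (Icc 0 r))
    (hF : IntegrableOn F (ball 0 r)) (hle : ∀ z ∈ ball (0 : ℂ) r, φ ‖z‖ ≤ F z ∧ F z ≤ ψ ‖z‖) :
    2 * Real.pi * ∫ y in (0 : ℝ)..r, y * φ y ≤ ∫ z in ball (0 : ℂ) r, F z ∧
      ∫ z in ball (0 : ℂ) r, F z ≤ 2 * Real.pi * ∫ y in (0 : ℝ)..r, y * ψ y := by
  rw [← integral_ball_comp_norm φ hr, ← integral_ball_comp_norm ψ hr]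
  exact ⟨setIntegral_mono_on hφ.integrableOn_ball_comp_norm hF measurableSet_ball
      fun z hz => (hle z hz).1,
    setIntegral_mono_on hF hψ.integrableOn_ball_comp_norm measurableSet_ball
      fun z hz => (hle z hz).2⟩

theorem ContinuousOn.div_rpow_of_pos {u v : ℝ → ℝ} {s : Set ℝ} {β : ℝ}
    (hu : ContinuousOn u s) (hv : ContinuousOn v s) (hpos : ∀ y ∈ s, 0 < v y) :
    ContinuousOn (fun y => u y / v y ^ β) s :=
  hu.div (hv.rpow_const fun y hy => Or.inl (hpos y hy).ne') fun y hy =>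
    (Real.rpow_pos_of_pos (hpos y hy) _).ne'

theorem norm_deriv_sq_bounds_of_convex_order {h : ℂ → ℂ} {α : ℝ}
    (hh : AnalyticOnNhd ℂ h (ball 0 1)) (h1 : deriv h 0 = 1)
    (hconv : ∀ z ∈ ball (0 : ℂ) 1, α < (1 + z * deriv (deriv h) z / deriv h z).re)
    {z : ℂ} (hz : z ∈ ball (0 : ℂ) 1) :
    1 / (1 + ‖z‖) ^ (4 * (1 - α)) ≤ ‖deriv h z‖ ^ 2 ∧
      ‖deriv h z‖ ^ 2 ≤ 1 / (1 - ‖z‖) ^ (4 * (1 - α)) := by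
  have hre : ∀ w ∈ ball (0 : ℂ) 1, -(2 * (1 - α) / 2) < (w * logDeriv (deriv h) w).re :=
    fun w hw => by
      have := hconv w hw
      rw [add_re, one_re, mul_div_assoc, ← logDeriv_apply] at this
      linarith
  have hα : α < 1 := by simpa using hconv 0 (mem_ball_self one_pos)
  have hne : ∀ w ∈ ball (0 : ℂ) 1, deriv h w ≠ 0 := fun w hw =>
    hh.deriv.ne_zero_of_re_mul_logDeriv_gt isOpen_ball (convex_ball 0 1).isPreconnected
      (mem_ball_self one_pos) (by simp [h1]) hre hw
  have hpd : DifferentiableOn ℂ (fun w => w * logDeriv (deriv h) w) (ball 0 1) :=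
    differentiableOn_id.mul (hh.deriv.deriv.differentiableOn.div hh.deriv.differentiableOn hne)
  have hp := fun w hw => re_bounds_of_norm_le_mul_norm_add (by linarith) (norm_nonneg w)
    (mem_ball_zero_iff.mp hw) (norm_le_norm_mul_norm_add_of_re_gt hpd (by simp) hre hw)
  obtain ⟨hlo, hhi⟩ :=
    norm_sq_bounds_of_re_mul_logDeriv_bounds hh.deriv.differentiableOn hne hp hz
  rw [h1, norm_one, one_pow, show 2 * (2 * (1 - α)) = 4 * (1 - α) by ring] at hlo hhi
  have hz1 : ‖z‖ < 1 := mem_ball_zero_iff.mp hz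
  rw [div_le_iff₀ (by positivity), le_div_iff₀ (Real.rpow_pos_of_pos (by linarith) _)]
  exact ⟨hlo, hhi⟩

theorem stmt_15_general (α : ℝ)
    (ζ : ℂ) (hζ : ‖ζ‖ ≤ 1) (n : ℕ)
    (h g : ℂ → ℂ)
    (hhA : AnalyticOnNhd ℂ h (ball (0 : ℂ) 1))
    (h1 : deriv h 0 = 1)
    (hconv : ∀ z ∈ ball (0 : ℂ) 1,
      α < (1 + z * deriv (deriv h) z / deriv h z).re)
    (hrel : ∀ z ∈ ball (0 : ℂ) 1, deriv g z = ζ * z ^ n * deriv h z) :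
    ∀ r : ℝ, 0 < r → r < 1 →
      2 * Real.pi * (∫ ρ in (0 : ℝ)..r,
          ρ * (1 - ‖ζ‖ ^ 2 * ρ ^ (2 * n)) / (1 + ρ) ^ (4 * (1 - α))) ≤
        (∫ z in ball (0 : ℂ) r,
          (‖(deriv h z)‖ ^ 2 - ‖(deriv g z)‖ ^ 2)) ∧
      (∫ z in ball (0 : ℂ) r,
          (‖(deriv h z)‖ ^ 2 - ‖(deriv g z)‖ ^ 2)) ≤
        2 * Real.pi * ∫ ρ in (0 : ℝ)..r,
          ρ * (1 - ‖ζ‖ ^ 2 * ρ ^ (2 * n)) / (1 - ρ) ^ (4 * (1 - α)) := by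
  intro r hr0 hr1
  have hsub : ball (0 : ℂ) r ⊆ ball 0 1 := ball_subset_ball hr1.le
  have hjac : EqOn (fun z => ‖deriv h z‖ ^ 2 - ‖deriv g z‖ ^ 2)
      (fun z => (1 - ‖ζ‖ ^ 2 * ‖z‖ ^ (2 * n)) * ‖deriv h z‖ ^ 2) (ball 0 r) := fun z hz => by
    simp only [hrel z (hsub hz), norm_mul, norm_pow]; ring
  rw [setIntegral_congr_fun measurableSet_ball hjac]
  simp only [mul_div_assoc]
  refine integral_ball_bounds_of_radial_bounds hr0.le
    (ContinuousOn.div_rpow_of_pos (by fun_prop) (by fun_prop) fun y hy => by linarith [hy.1])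
    (ContinuousOn.div_rpow_of_pos (by fun_prop) (by fun_prop) fun y hy => by linarith [hy.2])
    ?_ fun z hz => ?_
  · exact (((by fun_prop : Continuous fun z : ℂ => 1 - ‖ζ‖ ^ 2 * ‖z‖ ^ (2 * n)).continuousOn.mul
      ((hhA.deriv.continuousOn.mono (closedBall_subset_ball hr1)).norm.pow 2)).integrableOn_compact
        (isCompact_closedBall 0 r)).mono_set ball_subset_closedBall
  · have hweight : 0 ≤ 1 - ‖ζ‖ ^ 2 * ‖z‖ ^ (2 * n) := sub_nonneg.mpr <|
      mul_le_one₀ (pow_le_one₀ (norm_nonneg ζ) hζ) (by positivity)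
        (pow_le_one₀ (norm_nonneg z) (mem_ball_zero_iff.mp (hsub hz)).le)
    obtain ⟨hlo, hhi⟩ := norm_deriv_sq_bounds_of_convex_order hhA h1 hconv (hsub hz)
    simp only [div_eq_mul_one_div (1 - ‖ζ‖ ^ 2 * ‖z‖ ^ (2 * n))]
    exact ⟨mul_le_mul_of_nonneg_left hlo hweight, mul_le_mul_of_nonneg_left hhi hweight⟩

theorem stmt_15 (α : ℝ) (hα : 0 ≤ α ∧ α < 1)
    (ζ : ℂ) (hζ : ‖ζ‖ ≤ 1) (n : ℕ) (hn : 1 ≤ n)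
    (h g : ℂ → ℂ)
    (hhA : AnalyticOnNhd ℂ h (ball (0 : ℂ) 1))
    (hgA : AnalyticOnNhd ℂ g (ball (0 : ℂ) 1))
    (h0 : h 0 = 0) (h1 : deriv h 0 = 1)
    (hconv : ∀ z ∈ ball (0 : ℂ) 1,
      α < (1 + z * deriv (deriv h) z / deriv h z).re)
    (hrel : ∀ z ∈ ball (0 : ℂ) 1, deriv g z = ζ * z ^ n * deriv h z) :
    ∀ r : ℝ, 0 < r → r < 1 →
      2 * Real.pi * (∫ ρ in (0 : ℝ)..r,
          ρ * (1 - ‖ζ‖ ^ 2 * ρ ^ (2 * n)) / (1 + ρ) ^ (4 * (1 - α))) ≤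
        (∫ z in ball (0 : ℂ) r,
          (‖(deriv h z)‖ ^ 2 - ‖(deriv g z)‖ ^ 2)) ∧
      (∫ z in ball (0 : ℂ) r,
          (‖(deriv h z)‖ ^ 2 - ‖(deriv g z)‖ ^ 2)) ≤
        2 * Real.pi * ∫ ρ in (0 : ℝ)..r,
          ρ * (1 - ‖ζ‖ ^ 2 * ρ ^ (2 * n)) / (1 - ρ) ^ (4 * (1 - α)) :=
  stmt_15_general α ζ hζ n h g hhA h1 hconv hrel
end

section
/- Let -1/2 < α < 0, n ≥ 2, and suppose h is analytic on 𝔻 with h'(z) ≠ 0 and Re(1 + z h''(z)/h'(z)) > α on 𝔻. For |λ| = 1 let F_λ(z) = h(z) - λ g(z) where g' = zⁿh'. Then for |z| = r < (((1+2α)/(1+2n+2α)))^{1/n}, Re(1 + z F_λ''(z)/F_λ'(z)) = Re(1 + z h''(z)/h'(z)) + n·Re(λzⁿ/(λzⁿ - 1)) > α - n rⁿ/(1 - rⁿ) > -1/2. -/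
open Complex Metric

theorem stmt_17 (α : ℝ) (hα : -1/2 < α ∧ α < 0) (n : ℕ) (hn : 2 ≤ n)
    (h g : ℂ → ℂ)
    (hhA : AnalyticOnNhd ℂ h (ball (0 : ℂ) 1))
    (hgA : AnalyticOnNhd ℂ g (ball (0 : ℂ) 1))
    (hh' : ∀ z ∈ ball (0 : ℂ) 1, deriv h z ≠ 0)
    (hconv : ∀ z ∈ ball (0 : ℂ) 1,
      α < (1 + z * deriv (deriv h) z / deriv h z).re)
    (hrel : ∀ z ∈ ball (0 : ℂ) 1, deriv g z = z ^ n * deriv h z)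
    (lam : ℂ) (hlam : ‖lam‖ = 1)
    (F : ℂ → ℂ) (hF : ∀ z, F z = h z - lam * g z) :
    ∀ z ∈ ball (0 : ℂ) 1,
      ‖z‖ < ((1 + 2 * α) / (1 + 2 * n + 2 * α)) ^ ((1 : ℝ) / n) →
      (1 + z * deriv (deriv F) z / deriv F z).re =
        (1 + z * deriv (deriv h) z / deriv h z).re +
          (n : ℝ) * (lam * z ^ n / (lam * z ^ n - 1)).re ∧
      α - (n : ℝ) * ‖z‖ ^ n / (1 - ‖z‖ ^ n) <
        (1 + z * deriv (deriv F) z / deriv F z).re ∧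
      -(1/2 : ℝ) < α - (n : ℝ) * ‖z‖ ^ n / (1 - ‖z‖ ^ n) := by
  intro z hz hzr
  have hzabs : ‖z‖ < 1 := by simpa using hz
  -- first derivative of F on the ball
  have hFfun : F = fun x => h x - lam * g x := funext hF
  have hdF : ∀ w ∈ ball (0 : ℂ) 1, deriv F w = (1 - lam * w ^ n) * deriv h w := by
    intro w hw
    have hdh : DifferentiableAt ℂ h w := (hhA w hw).differentiableAt
    have hdg : DifferentiableAt ℂ g w := (hgA w hw).differentiableAt
    rw [hFfun, deriv_fun_sub hdh (hdg.const_mul lam), deriv_const_mul _ hdg, hrel w hw]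
    ring
  -- second derivative at z
  have hdhA : AnalyticOnNhd ℂ (deriv h) (ball (0 : ℂ) 1) := hhA.deriv
  have hev : deriv F =ᶠ[nhds z] (fun w => (1 - lam * w ^ n) * deriv h w) := by
    filter_upwards [isOpen_ball.mem_nhds hz] with w hw using hdF w hw
  have hd2F : deriv (deriv F) z =
      -(lam * n * z ^ (n - 1)) * deriv h z + (1 - lam * z ^ n) * deriv (deriv h) z := by
    rw [hev.deriv_eq]
    have h1 : DifferentiableAt ℂ (fun w : ℂ => 1 - lam * w ^ n) z := by fun_prop
    have h2 : DifferentiableAt ℂ (deriv h) z := (hdhA z hz).differentiableAt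
    rw [deriv_fun_mul h1 h2]
    have hd1 : deriv (fun w : ℂ => 1 - lam * w ^ n) z = -(lam * n * z ^ (n - 1)) := by
      rw [deriv_fun_sub (by fun_prop) (by fun_prop), deriv_const, deriv_const_mul _ (by fun_prop),
        deriv_pow_field]
      ring
    rw [hd1]
  -- nonvanishing of 1 - λ zⁿ
  have hB : (1 : ℂ) - lam * z ^ n ≠ 0 := by
    intro hc
    have he : lam * z ^ n = 1 := by linear_combination -hc
    have h1 : ‖lam * z ^ n‖ = 1 := by rw [he]; simp
    rw [norm_mul, hlam, one_mul, norm_pow] at h1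
    have h2 : ‖z‖ ^ n < 1 := pow_lt_one₀ (norm_nonneg z) hzabs (by omega)
    simp_all
  have hA := hh' z hz
  have hFz : deriv F z = (1 - lam * z ^ n) * deriv h z := hdF z hz
  -- key complex identity
  have hkey : 1 + z * deriv (deriv F) z / deriv F z =
      (1 + z * deriv (deriv h) z / deriv h z) + n * (lam * z ^ n / (lam * z ^ n - 1)) := by
    obtain ⟨m, hm⟩ : ∃ m, n = m + 1 := ⟨n - 1, by omega⟩
    subst hm
    simp only [Nat.add_sub_cancel] at hd2F
    rw [hd2F, hFz, pow_succ]
    have hB' : (1 : ℂ) - lam * (z ^ m * z) ≠ 0 := by rw [← pow_succ]; exact hB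
    have hC' : lam * (z ^ m * z) - 1 ≠ 0 := fun hc => hB' (by linear_combination -hc)
    rw [show lam * (z ^ m * z) / (lam * (z ^ m * z) - 1) =
        -(lam * (z ^ m * z)) / (1 - lam * (z ^ m * z)) by rw [← neg_sub, div_neg, neg_div]]
    rw [add_assoc, mul_div_assoc', div_add_div _ _ hA hB', add_right_inj,
      div_eq_div_iff (mul_ne_zero hB' hA) (mul_ne_zero hA hB')]
    push_cast
    ring
  -- real-part bounds
  set t : ℝ := ‖z‖ ^ n with ht
  have ht0 : 0 ≤ t := pow_nonneg (norm_nonneg z) n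
  have hn2 : (2 : ℝ) ≤ n := by exact_mod_cast hn
  have hdpos : (0 : ℝ) < 1 + 2 * n + 2 * α := by nlinarith [hα.1]
  have hT : t < (1 + 2 * α) / (1 + 2 * n + 2 * α) := by
    have hTnn : (0 : ℝ) ≤ (1 + 2 * α) / (1 + 2 * n + 2 * α) :=
      div_nonneg (by linarith [hα.1]) (le_of_lt hdpos)
    calc t < (((1 + 2 * α) / (1 + 2 * n + 2 * α)) ^ ((1 : ℝ) / n)) ^ n :=
            pow_lt_pow_left₀ hzr (norm_nonneg z) (by omega)
      _ = (1 + 2 * α) / (1 + 2 * n + 2 * α) := by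
            rw [← Real.rpow_natCast (((1 + 2 * α) / (1 + 2 * n + 2 * α)) ^ ((1 : ℝ) / n)) n,
              ← Real.rpow_mul hTnn, one_div,
              inv_mul_cancel₀ (by positivity : ((n : ℝ)) ≠ 0), Real.rpow_one]
  have ht1 : t < 1 := by
    have hlt : (1 + 2 * α) / (1 + 2 * n + 2 * α) < 1 := by
      rw [div_lt_one hdpos]; nlinarith
    linarith
  -- bound Re(w/(w-1)) from below
  have hw : ‖lam * z ^ n‖ = t := by rw [norm_mul, hlam, one_mul, norm_pow]
  have hwd : (1 : ℝ) - t ≤ ‖lam * z ^ n - 1‖ := by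
    calc (1 : ℝ) - t = ‖(1 : ℂ)‖ - ‖lam * z ^ n‖ := by rw [hw]; simp
      _ ≤ ‖1 - lam * z ^ n‖ := by
            simpa using norm_sub_norm_le (1 : ℂ) (lam * z ^ n)
      _ = ‖lam * z ^ n - 1‖ := by
            rw [← norm_neg]; congr 1; ring
  have hreb : -(t / (1 - t)) ≤ (lam * z ^ n / (lam * z ^ n - 1)).re := by
    have habs : ‖lam * z ^ n / (lam * z ^ n - 1)‖ ≤ t / (1 - t) := by
      rw [norm_div, hw]
      exact div_le_div_of_nonneg_left ht0 (by linarith) hwd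
    have hre := neg_le_of_abs_le (Complex.abs_re_le_norm (lam * z ^ n / (lam * z ^ n - 1)))
    linarith [neg_le_neg habs]
  -- real part of the identity
  have hre1 : (1 + z * deriv (deriv F) z / deriv F z).re =
      (1 + z * deriv (deriv h) z / deriv h z).re +
        (n : ℝ) * (lam * z ^ n / (lam * z ^ n - 1)).re := by
    rw [hkey, Complex.add_re]
    congr 1
    simp [Complex.mul_re]
  refine ⟨hre1, ?_, ?_⟩
  · have hc := hconv z hz
    have hmul : (n : ℝ) * (-(t / (1 - t))) ≤ (n : ℝ) * (lam * z ^ n / (lam * z ^ n - 1)).re :=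
      mul_le_mul_of_nonneg_left hreb (by positivity)
    rw [hre1]
    have : (n : ℝ) * (-(t / (1 - t))) = -((n : ℝ) * t / (1 - t)) := by ring
    rw [this] at hmul
    linarith
  · have hT' : t * (1 + 2 * n + 2 * α) < 1 + 2 * α := (lt_div_iff₀ hdpos).mp hT
    have hfrac : (n : ℝ) * t / (1 - t) < 1 / 2 + α := by
      rw [div_lt_iff₀ (by linarith : (0:ℝ) < 1 - t)]
      nlinarith
    linarith
end
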